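/- arXiv:2111.09759 — 5 statements merged into one kernel-verified Lean document; each statement's English description precedes it below -/
import Mathlib

section
/- For n ≠ 2, the function u defined implicitly by u^{2/n} ( (8/(n-2)) u t² - 4 x t + Σ_{i=1}^n y_i² ) = C satisfies the (1,n)-dKP equation u_{xt} - (u u_x)_x = Σ_{i=1}^n u_{y_i y_i} on any open set where u is a smooth implicit solution. -/
open scoped BigOperators
open Filter

/-- Generic implicit differentiation lemma. -/
theorem implicit_deriv_formula {p a C c' B' : ℝ} {w c B : ℝ → ℝ} {s₀ d : ℝ}
    (hw : HasDerivAt w d s₀) (hc : HasDerivAt c c' s₀) (hB : HasDerivAt B B' s₀)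
    (hwpos : 0 < w s₀)
    (heq : ∀ᶠ s in nhds s₀, (w s) ^ p * (a * c s * w s + B s) = C)
    (hD : p * (a * c s₀ * w s₀ + B s₀) + a * c s₀ * w s₀ ≠ 0) :
    d = -(a * c' * w s₀ + B') * w s₀ /
        (p * (a * c s₀ * w s₀ + B s₀) + a * c s₀ * w s₀) := by
  set w₀ := w s₀
  set F₀ := a * c s₀ * w₀ + B s₀ with hF₀
  have hw0 : w₀ ≠ 0 := hwpos.ne'
  have hrp : HasDerivAt (fun s => w s ^ p) (d * p * w₀ ^ (p - 1)) s₀ :=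
    hw.rpow_const (Or.inl hw0)
  have hF : HasDerivAt (fun s => a * c s * w s + B s)
      (a * (c' * w₀ + c s₀ * d) + B') s₀ := by
    simpa [mul_assoc, Pi.add_def] using (((hc.mul hw).const_mul a).add hB)
  have hH : HasDerivAt (fun s => w s ^ p * (a * c s * w s + B s))
      ((d * p * w₀ ^ (p - 1)) * F₀ + (w₀ ^ p) * (a * (c' * w₀ + c s₀ * d) + B')) s₀ :=
    hrp.mul hF
  have hH0 : HasDerivAt (fun s => w s ^ p * (a * c s * w s + B s)) 0 s₀ :=
    (hasDerivAt_const s₀ C).congr_of_eventuallyEq heq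
  have hzero : (d * p * w₀ ^ (p - 1)) * F₀ + (w₀ ^ p) * (a * (c' * w₀ + c s₀ * d) + B') = 0 :=
    hH.unique hH0
  have hpow : w₀ ^ p = w₀ ^ (p - 1) * w₀ := by
    rw [← Real.rpow_add_one hw0 (p - 1)]; ring_nf
  rw [hpow] at hzero
  have hp1 : (0:ℝ) < w₀ ^ (p - 1) := Real.rpow_pos_of_pos hwpos _
  have hbr : p * d * F₀ + w₀ * (a * (c' * w₀ + c s₀ * d) + B') = 0 := by
    have h2 : w₀ ^ (p-1) * (p * d * F₀ + w₀ * (a * (c' * w₀ + c s₀ * d) + B')) = w₀ ^ (p-1) * 0 := by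
      rw [mul_zero]; linear_combination hzero
    exact mul_left_cancel₀ hp1.ne' h2
  rw [eq_div_iff hD]
  linear_combination hbr

/-- sum of squares after an update -/
theorem sum_sq_update {n : ℕ} (y : Fin n → ℝ) (i : Fin n) (s : ℝ) :
    ∑ j, (Function.update y i s j)^2 = (∑ j, (y j)^2) - (y i)^2 + s^2 := by
  have h1 : ∀ j, (Function.update y i s j)^2 = Function.update (fun j => (y j)^2) i (s^2) j := by
    intro j; rcases eq_or_ne j i with rfl|hj
    · simp
    · simp [Function.update_of_ne hj]
  simp_rw [h1]
  rw [Finset.sum_update_of_mem (Finset.mem_univ i),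
    Finset.sum_eq_sum_sdiff_singleton_add (Finset.mem_univ i) (fun j => (y j)^2)]
  ring

set_option maxHeartbeats 1000000 in
theorem final_algebra (W t x Sy Dv p a nr : ℝ) (hDv : Dv ≠ 0) (hp0 : p ≠ 0)
    (hp1 : (1:ℝ) - p ≠ 0) (hpn : p * nr = 2) (han : a * (1 - p) = 4 * p)
    (hrelD : Dv = p * (a * t^2 * W + (-(4*x*t) + Sy)) + a * t^2 * W) :
    (((4*W + 4*t*((4*x - 2*a*t*W) * W / Dv)) * Dv - 4*t*W * (p * (2*a*t*W + a*t^2*((4*x - 2*a*t*W) * W / Dv) + -(4*x)) + (2*a*t*W + a*t^2*((4*x - 2*a*t*W) * W / Dv)))) / Dv^2) - ((4 * t * W / Dv) * (4*t*W / Dv) + W * ((4*t*(4 * t * W / Dv) * Dv - 4*t*W * (p * (a*t^2*(4 * t * W / Dv) + -(4*t)) + a*t^2*(4 * t * W / Dv))) / Dv^2)) = nr * (-(2*W) / Dv) + ((4*(1+p)*W * Dv - 4*(p+1)*a*t^2*W^2) / Dv^3) * Sy := by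
  have key2 : ((4 : ℝ)*W*Dv^2*p + (2 : ℝ)*W*Dv^2*p*nr + (-8 : ℝ)*W*Dv^2*p^2 + (-4 : ℝ)*W*Dv^2*p^2*nr + (4 : ℝ)*W*Dv^2*p^3 + (2 : ℝ)*W*Dv^2*p^3*nr + (-4 : ℝ)*W*Sy*Dv*p + (4 : ℝ)*W*Sy*Dv*p^2 + (4 : ℝ)*W*Sy*Dv*p^3 + (-4 : ℝ)*W*Sy*Dv*p^4 + (16 : ℝ)*W*t*x*Dv*p + (-16 : ℝ)*W*t*x*Dv*p^2 + (-16 : ℝ)*W*t*x*Dv*p^3 + (16 : ℝ)*W*t*x*Dv*p^4 + (-32 : ℝ)*W^2*t^2*Dv*p + (-16 : ℝ)*W^2*t^2*Dv*p*a + (48 : ℝ)*W^2*t^2*Dv*p^2 + (24 : ℝ)*W^2*t^2*Dv*p^2*a + (-16 : ℝ)*W^2*t^2*Dv*p^4 + (-8 : ℝ)*W^2*t^2*Dv*p^4*a + (4 : ℝ)*W^2*t^2*Sy*p*a + (-4 : ℝ)*W^2*t^2*Sy*p^2*a + (-4 : ℝ)*W^2*t^2*Sy*p^3*a + (4 : ℝ)*W^2*t^2*Sy*p^4*a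 + (-16 : ℝ)*W^2*t^3*x*p*a + (16 : ℝ)*W^2*t^3*x*p^2*a + (16 : ℝ)*W^2*t^3*x*p^3*a + (-16 : ℝ)*W^2*t^3*x*p^4*a + (16 : ℝ)*W^3*t^4*p*a + (8 : ℝ)*W^3*t^4*p*a^2 + (-16 : ℝ)*W^3*t^4*p^2*a + (-8 : ℝ)*W^3*t^4*p^2*a^2 + (-16 : ℝ)*W^3*t^4*p^3*a + (-8 : ℝ)*W^3*t^4*p^3*a^2 + (16 : ℝ)*W^3*t^4*p^4*a + (8 : ℝ)*W^3*t^4*p^4*a^2) = (0:ℝ) := by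
    linear_combination ((1-p)^2 * p * ((4 : ℝ)*W*Dv + (2 : ℝ)*W*Dv*nr + (-4 : ℝ)*W*Sy + (2 : ℝ)*W*Sy*p*nr + (16 : ℝ)*W*t*x + (-8 : ℝ)*W*t*x*p*nr + (-32 : ℝ)*W^2*t^2 + (-12 : ℝ)*W^2*t^2*a + (2 : ℝ)*W^2*t^2*a*nr + (-16 : ℝ)*W^2*t^2*p + (-4 : ℝ)*W^2*t^2*p*a + (2 : ℝ)*W^2*t^2*p*a*nr)) * hrelD
      + ((1-p)^2 * ((2 : ℝ)*W*Sy^2*p^2 + (-16 : ℝ)*W*t*x*Sy*p^2 + (32 : ℝ)*W*t^2*x^2*p^2 + (4 : ℝ)*W^2*t^2*Sy*p*a + (4 : ℝ)*W^2*t^2*Sy*p^2*a + (-16 : ℝ)*W^2*t^3*x*p*a + (-16 : ℝ)*W^2*t^3*x*p^2*a + (2 : ℝ)*W^3*t^4*a^2 + (4 : ℝ)*W^3*t^4*p*a^2 + (2 : ℝ)*W^3*t^4*p^2*a^2)) * hpn + (((8 : ℝ)*W^2*t^2*Sy*p + (-12 : ℝ)*W^2*t^2*Sy*p^2 + (4 :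 ℝ)*W^2*t^2*Sy*p^4 + (-32 : ℝ)*W^2*t^3*x*p + (48 : ℝ)*W^2*t^3*x*p^2 + (-16 : ℝ)*W^2*t^3*x*p^4 + (4 : ℝ)*W^3*t^4*a + (-8 : ℝ)*W^3*t^4*p^2*a + (4 : ℝ)*W^3*t^4*p^4*a)) * han
  have h3 : (((4*W + 4*t*((4*x - 2*a*t*W) * W / Dv)) * Dv - 4*t*W * (p * (2*a*t*W + a*t^2*((4*x - 2*a*t*W) * W / Dv) + -(4*x)) + (2*a*t*W + a*t^2*((4*x - 2*a*t*W) * W / Dv)))) / Dv^2) - ((4 * t * W / Dv) * (4*t*W / Dv) + W * ((4*t*(4 * t * W / Dv) * Dv - 4*t*W * (p * (a*t^2*(4 * t * W / Dv) + -(4*t)) + a*t^2*(4 * t * W / Dv))) / Dv^2)) - (nr * (-(2*W) / Dv) + ((4*(1+p)*W * Dv - 4*(p+1)*a*t^2*W^2) / Dv^3) * Sy)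
      = ((4 : ℝ)*W*Dv^2*p + (2 : ℝ)*W*Dv^2*p*nr + (-8 : ℝ)*W*Dv^2*p^2 + (-4 : ℝ)*W*Dv^2*p^2*nr + (4 : ℝ)*W*Dv^2*p^3 + (2 : ℝ)*W*Dv^2*p^3*nr + (-4 : ℝ)*W*Sy*Dv*p + (4 : ℝ)*W*Sy*Dv*p^2 + (4 : ℝ)*W*Sy*Dv*p^3 + (-4 : ℝ)*W*Sy*Dv*p^4 + (16 : ℝ)*W*t*x*Dv*p + (-16 : ℝ)*W*t*x*Dv*p^2 + (-16 : ℝ)*W*t*x*Dv*p^3 + (16 : ℝ)*W*t*x*Dv*p^4 + (-32 : ℝ)*W^2*t^2*Dv*p + (-16 : ℝ)*W^2*t^2*Dv*p*a + (48 : ℝ)*W^2*t^2*Dv*p^2 + (24 : ℝ)*W^2*t^2*Dv*p^2*a + (-16 : ℝ)*W^2*t^2*Dv*p^4 + (-8 : ℝ)*W^2*t^2*Dv*p^4*a + (4 : ℝ)*W^2*t^2*Sy*p*a + (-4 : ℝ)*W^2*t^2*Sy*p^2*a + (-4 : ℝ)*W^2*t^2*Sy*p^3*a + (4 : ℝ)*W^2*t^2*Sy*p^4*a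 + (-16 : ℝ)*W^2*t^3*x*p*a + (16 : ℝ)*W^2*t^3*x*p^2*a + (16 : ℝ)*W^2*t^3*x*p^3*a + (-16 : ℝ)*W^2*t^3*x*p^4*a + (16 : ℝ)*W^3*t^4*p*a + (8 : ℝ)*W^3*t^4*p*a^2 + (-16 : ℝ)*W^3*t^4*p^2*a + (-8 : ℝ)*W^3*t^4*p^2*a^2 + (-16 : ℝ)*W^3*t^4*p^3*a + (-8 : ℝ)*W^3*t^4*p^3*a^2 + (16 : ℝ)*W^3*t^4*p^4*a + (8 : ℝ)*W^3*t^4*p^4*a^2) / (Dv^3 * (p * (1-p)^2)) := by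
    field_simp
    ring
  rw [key2, zero_div] at h3
  linarith [h3]

set_option maxHeartbeats 2000000 in
/-- For `n ≠ 2`, the function `u` defined implicitly by
`u^{2/n} ((8/(n-2)) u t² - 4 x t + Σᵢ yᵢ²) = C` satisfies the `(1,n)`-dKP equation
`u_{xt} - (u u_x)_x = Σᵢ u_{yᵢyᵢ}`. -/
theorem implicit_solution_m1_general_n
    (n : ℕ) (hn : 1 ≤ n) (hn2 : n ≠ 2) (C : ℝ)
    (U : Set (ℝ × (Fin n → ℝ) × ℝ)) (hU : IsOpen U)
    (u : ℝ → (Fin n → ℝ) → ℝ → ℝ)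
    (hu : ContDiff ℝ (⊤ : ℕ∞) (fun q : ℝ × (Fin n → ℝ) × ℝ => u q.1 q.2.1 q.2.2))
    (hpos : ∀ x y t, (x, y, t) ∈ U → 0 < u x y t)
    (hrel : ∀ x y t, (x, y, t) ∈ U →
      (u x y t) ^ ((2 : ℝ) / n) *
        ((8 / ((n : ℝ) - 2)) * u x y t * t ^ 2 - 4 * x * t + ∑ i, (y i) ^ 2) = C)
    (hnondeg : ∀ x y t, (x, y, t) ∈ U →
      deriv (fun w : ℝ => w ^ ((2 : ℝ) / n) *
        ((8 / ((n : ℝ) - 2)) * w * t ^ 2 - 4 * x * t + ∑ i, (y i) ^ 2)) (u x y t) ≠ 0) :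
    ∀ x y t, (x, y, t) ∈ U →
      deriv (fun t' => deriv (fun x' => u x' y t') x) t
        - deriv (fun x' => u x' y t * deriv (fun x'' => u x'' y t) x') x
      = ∑ i, deriv (fun s => deriv (fun s' => u x (Function.update y i s') t) s) (y i) := by
  have hn0 : (n:ℝ) ≠ 0 := Nat.cast_ne_zero.mpr (by omega)
  have hn2' : ((n:ℝ) - 2) ≠ 0 := sub_ne_zero.mpr (by exact_mod_cast hn2)
  set p : ℝ := (2:ℝ) / n with hp
  set a : ℝ := 8 / ((n:ℝ) - 2) with ha
  set S : (Fin n → ℝ) → ℝ := fun y => ∑ i, (y i)^2 with hS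
  set D : ℝ → (Fin n → ℝ) → ℝ → ℝ := fun x y t =>
    p * (a * t^2 * u x y t + (-(4*x*t) + S y)) + a * t^2 * u x y t with hDdef
  have hdiff : Differentiable ℝ (fun q : ℝ × (Fin n → ℝ) × ℝ => u q.1 q.2.1 q.2.2) :=
    hu.differentiable (by simp)
  -- differentiability of slices
  have hdx : ∀ (y : Fin n → ℝ) (t x : ℝ), DifferentiableAt ℝ (fun x' => u x' y t) x := by
    intro y t x
    exact (hdiff.differentiableAt).comp x
      ((differentiableAt_id.prodMk (differentiableAt_const (y, t))))
  have hdt : ∀ (x : ℝ) (y : Fin n → ℝ) (t : ℝ), DifferentiableAt ℝ (fun t' => u x y t') t := by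
    intro x y t
    exact (hdiff.differentiableAt).comp t
      (((differentiableAt_const x).prodMk ((differentiableAt_const y).prodMk differentiableAt_id)))
  have hdy : ∀ (x : ℝ) (y : Fin n → ℝ) (t : ℝ) (i : Fin n) (s : ℝ),
      DifferentiableAt ℝ (fun s' => u x (Function.update y i s') t) s := by
    intro x y t i s
    exact (hdiff.differentiableAt).comp s
      (((differentiableAt_const x).prodMk
        (((hasDerivAt_update y i s).differentiableAt).prodMk (differentiableAt_const t))))
  -- nondegeneracy: D ≠ 0 on U
  have hDne : ∀ x y t, (x,y,t) ∈ U → D x y t ≠ 0 := by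
    intro x y t h
    have hw := hpos x y t h
    have hb : HasDerivAt (fun w : ℝ => a*w*t^2 - 4*x*t + ∑ i, (y i)^2)
        (a * t^2) (u x y t) := by
      simpa using ((((hasDerivAt_id (u x y t)).const_mul a).mul_const (t^2)).sub_const
        (4*x*t)).add_const (∑ i, (y i)^2)
    have h1 : HasDerivAt (fun w : ℝ => w ^ p * (a*w*t^2 - 4*x*t + ∑ i, (y i)^2))
        ((1 * p * (u x y t) ^ (p - 1)) * (a*(u x y t)*t^2 - 4*x*t + ∑ i, (y i)^2)
          + (u x y t) ^ p * (a * t^2)) (u x y t) :=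
      ((hasDerivAt_id (u x y t)).rpow_const (Or.inl hw.ne')).mul hb
    have h2 := hnondeg x y t h
    rw [h1.deriv] at h2
    intro h0
    apply h2
    have hpow : (u x y t) ^ p = (u x y t) ^ (p - 1) * u x y t := by
      rw [← Real.rpow_add_one hw.ne']; ring_nf
    rw [hpow]
    simp only [hDdef] at h0
    linear_combination ((u x y t) ^ (p - 1)) * h0
  -- eventual membership
  have hEx : ∀ x y t, (x,y,t) ∈ U → ∀ᶠ x' in nhds x, (x', y, t) ∈ U := by
    intro x y t h
    exact (Continuous.continuousAt (continuous_id.prodMk continuous_const)).eventually_mem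
      (hU.mem_nhds h)
  have hEt : ∀ x y t, (x,y,t) ∈ U → ∀ᶠ t' in nhds t, (x, y, t') ∈ U := by
    intro x y t h
    exact (Continuous.continuousAt
      (continuous_const.prodMk (continuous_const.prodMk continuous_id))).eventually_mem
      (hU.mem_nhds h)
  have hEy : ∀ x y t, (x,y,t) ∈ U → ∀ (i : Fin n),
      ∀ᶠ s in nhds (y i), (x, Function.update y i s, t) ∈ U := by
    intro x y t h i
    have hc : Continuous (fun s : ℝ => ((x, Function.update y i s, t) : ℝ × (Fin n → ℝ) × ℝ)) :=
      continuous_const.prodMk (((continuous_const : Continuous fun _ : ℝ => y).update i continuous_id).prodMk continuous_const)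
    have h' : (x, Function.update y i (y i), t) ∈ U := by
      rw [Function.update_eq_self]; exact h
    exact (hc.continuousAt (x := y i)).eventually_mem (hU.mem_nhds h')
  -- first derivative in x
  have hux : ∀ x y t, (x,y,t) ∈ U →
      HasDerivAt (fun x' => u x' y t) (4 * t * u x y t / D x y t) x := by
    intro x y t h
    have hd := hdx y t x
    have hB : HasDerivAt (fun x' : ℝ => -(4*x'*t) + S y) (-(4*t)) x := by
      simpa using (((hasDerivAt_id x).const_mul 4).mul_const t).neg.add_const (S y)
    have heq : ∀ᶠ x' in nhds x,
        (u x' y t) ^ p * (a * t^2 * u x' y t + (-(4*x'*t) + S y)) = C := by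
      filter_upwards [hEx x y t h] with x' hx'
      have hr := hrel x' y t hx'
      rw [← hr]
      congr 1
      simp only [hS]; ring
    have hDne' : p * (a * t^2 * u x y t + (-(4*x*t) + S y)) + a * t^2 * u x y t ≠ 0 := by
      have e : p * (a * t^2 * u x y t + (-(4*x*t) + S y)) + a * t^2 * u x y t = D x y t := by
        simp only [hDdef]
      rw [e]; exact hDne x y t h
    have key := implicit_deriv_formula (p := p) (a := a) (c := fun _ => t^2)
      (B := fun x' => -(4*x'*t) + S y) (s₀ := x)
      hd.hasDerivAt (hasDerivAt_const x (t^2)) hB (hpos x y t h) heq hDne'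
    have hval : deriv (fun x' => u x' y t) x = 4 * t * u x y t / D x y t := by
      rw [key]; simp only [hDdef]; ring
    exact hval ▸ hd.hasDerivAt
  -- first derivative in t
  have hut : ∀ x y t, (x,y,t) ∈ U →
      HasDerivAt (fun t' => u x y t') ((4*x - 2*a*t*u x y t) * u x y t / D x y t) t := by
    intro x y t h
    have hd := hdt x y t
    have hc : HasDerivAt (fun t' : ℝ => t'^2) (2*t) t := by
      simpa using hasDerivAt_pow 2 t
    have hB : HasDerivAt (fun t' : ℝ => -(4*x*t') + S y) (-(4*x)) t := by
      simpa using (((hasDerivAt_id t).const_mul (4*x)).neg.add_const (S y))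
    have heq : ∀ᶠ t' in nhds t,
        (u x y t') ^ p * (a * t'^2 * u x y t' + (-(4*x*t') + S y)) = C := by
      filter_upwards [hEt x y t h] with t' ht'
      have hr := hrel x y t' ht'
      rw [← hr]
      congr 1
      simp only [hS]; ring
    have hDne' : p * (a * t^2 * u x y t + (-(4*x*t) + S y)) + a * t^2 * u x y t ≠ 0 := by
      have e : p * (a * t^2 * u x y t + (-(4*x*t) + S y)) + a * t^2 * u x y t = D x y t := by
        simp only [hDdef]
      rw [e]; exact hDne x y t h
    have key := implicit_deriv_formula (p := p) (a := a) (c := fun t' => t'^2)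
      (B := fun t' => -(4*x*t') + S y) (s₀ := t)
      hd.hasDerivAt hc hB (hpos x y t h) heq hDne'
    have hval : deriv (fun t' => u x y t') t = (4*x - 2*a*t*u x y t) * u x y t / D x y t := by
      rw [key]; simp only [hDdef]; ring
    exact hval ▸ hd.hasDerivAt
  -- first derivative in y i
  have huy : ∀ x y t, (x,y,t) ∈ U → ∀ (i : Fin n),
      HasDerivAt (fun s => u x (Function.update y i s) t)
        (-(2 * y i) * u x y t / D x y t) (y i) := by
    intro x y t h i
    have hd := hdy x y t i (y i)
    have hB : HasDerivAt (fun s : ℝ => -(4*x*t) + (S y - (y i)^2 + s^2)) (2*(y i)) (y i) := by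
      have h2 : HasDerivAt (fun s : ℝ => s^2) (2*(y i)) (y i) := by
        simpa using hasDerivAt_pow 2 (y i)
      exact (h2.const_add (S y - (y i)^2)).const_add (-(4*x*t))
    have heq : ∀ᶠ s in nhds (y i),
        (u x (Function.update y i s) t) ^ p *
          (a * t^2 * u x (Function.update y i s) t
            + (-(4*x*t) + (S y - (y i)^2 + s^2))) = C := by
      filter_upwards [hEy x y t h i] with s hs
      have hr := hrel x (Function.update y i s) t hs
      rw [← hr]
      congr 1
      rw [sum_sq_update]
      simp only [hS]; ring
    have hw0 : (0:ℝ) < u x (Function.update y i (y i)) t := by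
      rw [Function.update_eq_self]; exact hpos x y t h
    have hDne' : p * (a * t^2 * u x (Function.update y i (y i)) t
          + (-(4*x*t) + (S y - (y i)^2 + (y i)^2)))
        + a * t^2 * u x (Function.update y i (y i)) t ≠ 0 := by
      have e : p * (a * t^2 * u x (Function.update y i (y i)) t
            + (-(4*x*t) + (S y - (y i)^2 + (y i)^2)))
          + a * t^2 * u x (Function.update y i (y i)) t = D x y t := by
        rw [Function.update_eq_self]; simp only [hDdef]; ring
      rw [e]; exact hDne x y t h
    have key := implicit_deriv_formula (p := p) (a := a) (c := fun _ => t^2)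
      (B := fun s => -(4*x*t) + (S y - (y i)^2 + s^2)) (s₀ := y i)
      hd.hasDerivAt (hasDerivAt_const (y i) (t^2)) hB hw0 heq hDne'
    simp only [Function.update_eq_self] at key
    have hval : deriv (fun s => u x (Function.update y i s) t) (y i)
        = -(2 * y i) * u x y t / D x y t := by
      rw [key]; simp only [hDdef]; ring
    exact hval ▸ hd.hasDerivAt
  intro x y t hP
  have hDv : D x y t ≠ 0 := hDne x y t hP
  -- (A) u_xt
  have hWt : HasDerivAt (fun t' => u x y t') ((4*x - 2*a*t*u x y t) * u x y t / D x y t) t := hut x y t hP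
  have hevA : (fun t' => deriv (fun x' => u x' y t') x) =ᶠ[nhds t]
      (fun t' => 4 * t' * u x y t' / D x y t') := by
    filter_upwards [hEt x y t hP] with t' ht'
    exact (hux x y t' ht').deriv
  have hDT : HasDerivAt (fun t' => D x y t') (p * (2*a*t*u x y t + a*t^2*((4*x - 2*a*t*u x y t) * u x y t / D x y t) + -(4*x)) + (2*a*t*u x y t + a*t^2*((4*x - 2*a*t*u x y t) * u x y t / D x y t))) t := by
    simp only [hDdef]
    have h1 : HasDerivAt (fun t' : ℝ => a * t'^2 * u x y t')
        (2*a*t*u x y t + a*t^2*((4*x - 2*a*t*u x y t) * u x y t / D x y t)) t := by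
      have h := ((hasDerivAt_pow 2 t).const_mul a).mul hWt
      refine h.congr_deriv ?_
      push_cast; ring
    have h2 : HasDerivAt (fun t' : ℝ => -(4*x*t') + S y) (-(4*x)) t := by
      simpa using (((hasDerivAt_id t).const_mul (4*x)).neg.add_const (S y))
    exact ((h1.add h2).const_mul p).add h1
  have hNA : HasDerivAt (fun t' => 4 * t' * u x y t') (4*u x y t + 4*t*((4*x - 2*a*t*u x y t) * u x y t / D x y t)) t := by
    have h := ((hasDerivAt_id t).const_mul 4).mul hWt
    simp only [id_eq] at h
    refine h.congr_deriv ?_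
    ring
  have hGA : HasDerivAt (fun t' => 4 * t' * u x y t' / D x y t') (((4*u x y t + 4*t*((4*x - 2*a*t*u x y t) * u x y t / D x y t)) * D x y t - 4*t*u x y t * (p * (2*a*t*u x y t + a*t^2*((4*x - 2*a*t*u x y t) * u x y t / D x y t) + -(4*x)) + (2*a*t*u x y t + a*t^2*((4*x - 2*a*t*u x y t) * u x y t / D x y t)))) / D x y t^2) t :=
    hNA.div hDT hDv
  have hA : deriv (fun t' => deriv (fun x' => u x' y t') x) t = (((4*u x y t + 4*t*((4*x - 2*a*t*u x y t) * u x y t / D x y t)) * D x y t - 4*t*u x y t * (p * (2*a*t*u x y t + a*t^2*((4*x - 2*a*t*u x y t) * u x y t / D x y t) + -(4*x)) + (2*a*t*u x y t + a*t^2*((4*x - 2*a*t*u x y t) * u x y t / D x y t)))) / D x y t^2) := by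
    rw [hevA.deriv_eq]; exact hGA.deriv
  -- (B) (u u_x)_x
  have hWx : HasDerivAt (fun x' => u x' y t) (4 * t * u x y t / D x y t) x := hux x y t hP
  have hevB : (fun x' => u x' y t * deriv (fun x'' => u x'' y t) x') =ᶠ[nhds x]
      (fun x' => u x' y t * (4 * t * u x' y t / D x' y t)) := by
    filter_upwards [hEx x y t hP] with x' hx'
    rw [(hux x' y t hx').deriv]
  have hDX : HasDerivAt (fun x' => D x' y t) (p * (a*t^2*(4 * t * u x y t / D x y t) + -(4*t)) + a*t^2*(4 * t * u x y t / D x y t)) x := by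
    simp only [hDdef]
    have h1 : HasDerivAt (fun x' : ℝ => a * t^2 * u x' y t) (a*t^2*(4 * t * u x y t / D x y t)) x :=
      hWx.const_mul (a*t^2)
    have h2 : HasDerivAt (fun x' : ℝ => -(4*x'*t) + S y) (-(4*t)) x := by
      simpa using ((((hasDerivAt_id x).const_mul 4).mul_const t).neg.add_const (S y))
    exact ((h1.add h2).const_mul p).add h1
  have hNB : HasDerivAt (fun x' => 4 * t * u x' y t) (4*t*(4 * t * u x y t / D x y t)) x :=
    hWx.const_mul (4*t)
  have hGB : HasDerivAt (fun x' => u x' y t * (4 * t * u x' y t / D x' y t)) ((4 * t * u x y t / D x y t) * (4*t*u x y t / D x y t) + u x y t * ((4*t*(4 * t * u x y t / D x y t) * D x y t - 4*t*u x y t * (p * (a*t^2*(4 * t * u x y t / D x y t) + -(4*t)) + a*t^2*(4 * t * u x y t / D x y t))) / D x y t^2)) x :=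
    hWx.mul (hNB.div hDX hDv)
  have hB : deriv (fun x' => u x' y t * deriv (fun x'' => u x'' y t) x') x = ((4 * t * u x y t / D x y t) * (4*t*u x y t / D x y t) + u x y t * ((4*t*(4 * t * u x y t / D x y t) * D x y t - 4*t*u x y t * (p * (a*t^2*(4 * t * u x y t / D x y t) + -(4*t)) + a*t^2*(4 * t * u x y t / D x y t))) / D x y t^2)) := by
    rw [hevB.deriv_eq]; exact hGB.deriv
  -- (C) u_{y_i y_i}
  have hC : ∀ i, deriv (fun s => deriv (fun s' => u x (Function.update y i s') t) s) (y i)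
      = (((-(2*u x y t) + -(2*(y i))*(-(2 * y i) * u x y t / D x y t)) * D x y t - (-(2*(y i))*u x y t) * (p * (a*t^2*(-(2 * y i) * u x y t / D x y t) + 2*(y i)) + a*t^2*(-(2 * y i) * u x y t / D x y t))) / D x y t^2) := by
    intro i
    have hVy : HasDerivAt (fun s => u x (Function.update y i s) t) (-(2 * y i) * u x y t / D x y t) (y i) :=
      huy x y t hP i
    have hevC : (fun s => deriv (fun s' => u x (Function.update y i s') t) s) =ᶠ[nhds (y i)]
        (fun s => -(2*s) * u x (Function.update y i s) t / (p * (a*t^2*u x (Function.update y i s) t + (-(4*x*t) + (S y - (y i)^2 + s^2))) + a*t^2*u x (Function.update y i s) t)) := by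
      filter_upwards [hEy x y t hP i] with s hs
      have h1 := huy x (Function.update y i s) t hs i
      simp only [Function.update_idem, Function.update_self] at h1
      rw [h1.deriv]
      congr 1
      simp only [hDdef, hS]
      rw [sum_sq_update]
    have hDYne : (p * (a*t^2*u x (Function.update y i (y i)) t + (-(4*x*t) + (S y - (y i)^2 + (y i)^2))) + a*t^2*u x (Function.update y i (y i)) t) ≠ 0 := by
      have e : (p * (a*t^2*u x (Function.update y i (y i)) t + (-(4*x*t) + (S y - (y i)^2 + (y i)^2))) + a*t^2*u x (Function.update y i (y i)) t) = D x y t := by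
        rw [Function.update_eq_self]; simp only [hDdef]; ring
      rw [e]; exact hDv
    have hDY : HasDerivAt (fun s => (p * (a*t^2*u x (Function.update y i s) t + (-(4*x*t) + (S y - (y i)^2 + s^2))) + a*t^2*u x (Function.update y i s) t)) (p * (a*t^2*(-(2 * y i) * u x y t / D x y t) + 2*(y i)) + a*t^2*(-(2 * y i) * u x y t / D x y t)) (y i) := by
      have h1 : HasDerivAt (fun s : ℝ => a * t^2 * u x (Function.update y i s) t)
          (a*t^2*(-(2 * y i) * u x y t / D x y t)) (y i) := hVy.const_mul (a*t^2)
      have h2 : HasDerivAt (fun s : ℝ => -(4*x*t) + (S y - (y i)^2 + s^2)) (2*(y i)) (y i) := by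
        have h3 : HasDerivAt (fun s : ℝ => s^2) (2*(y i)) (y i) := by
          simpa using hasDerivAt_pow 2 (y i)
        exact (h3.const_add (S y - (y i)^2)).const_add (-(4*x*t))
      exact ((h1.add h2).const_mul p).add h1
    have hNC : HasDerivAt (fun s => -(2*s) * u x (Function.update y i s) t)
        (-(2*u x y t) + -(2*(y i))*(-(2 * y i) * u x y t / D x y t)) (y i) := by
      have h := (((hasDerivAt_id (y i)).const_mul 2).neg).mul hVy
      simp only [Function.update_eq_self, id_eq, Pi.neg_apply] at h
      refine h.congr_deriv ?_
      ring
    have hQ : HasDerivAt (fun s => -(2*s) * u x (Function.update y i s) t / (p * (a*t^2*u x (Function.update y i s) t + (-(4*x*t) + (S y - (y i)^2 + s^2))) + a*t^2*u x (Function.update y i s) t))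
        (((-(2*u x y t) + -(2*(y i))*(-(2 * y i) * u x y t / D x y t)) * D x y t - (-(2*(y i))*u x y t) * (p * (a*t^2*(-(2 * y i) * u x y t / D x y t) + 2*(y i)) + a*t^2*(-(2 * y i) * u x y t / D x y t))) / D x y t^2) (y i) := by
      have h := hNC.div hDY hDYne
      simp only [Function.update_eq_self] at h
      refine h.congr_deriv ?_
      simp only [hDdef]
      ring
    rw [hevC.deriv_eq]; exact hQ.deriv
  rw [hA, hB]
  rw [Finset.sum_congr rfl (fun i _ => hC i)]
  have hsplit : ∀ i : Fin n, (((-(2*u x y t) + -(2*(y i))*(-(2 * y i) * u x y t / D x y t)) * D x y t - (-(2*(y i))*u x y t) * (p * (a*t^2*(-(2 * y i) * u x y t / D x y t) + 2*(y i)) + a*t^2*(-(2 * y i) * u x y t / D x y t))) / D x y t^2) = (-(2*u x y t) / D x y t) + ((4*(1+p)*u x y t * D x y t - 4*(p+1)*a*t^2*u x y t^2) / D x y t^3) * (y i)^2 := by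
    intro i
    field_simp
    ring
  rw [Finset.sum_congr rfl (fun i _ => hsplit i), Finset.sum_add_distrib,
    Finset.sum_const, ← Finset.mul_sum, Finset.card_univ, Fintype.card_fin,
    nsmul_eq_mul]
  have hrelD' : D x y t = p * (a * t^2 * u x y t + (-(4*x*t) + S y)) + a * t^2 * u x y t := by
    simp only [hDdef]
  have hp0' : p ≠ 0 := by rw [hp]; exact div_ne_zero two_ne_zero hn0
  have hp1' : (1:ℝ) - p ≠ 0 := by
    rw [hp]
    intro h
    rw [sub_eq_zero] at h
    rw [eq_div_iff hn0] at h
    exact hn2' (by linarith)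
  have hpn' : p * (n:ℝ) = 2 := by rw [hp]; field_simp
  have han' : a * (1 - p) = 4 * p := by rw [ha, hp]; field_simp; ring
  exact final_algebra (u x y t) t x (S y) (D x y t) p a (n:ℝ) hDv hp0' hp1' hpn' han' hrelD'
end

section
/- For n = 2, the function u defined implicitly by u ( 4 u (ln u) t² - 4 x t + y₁² + y₂² ) = C satisfies the (1,2)-dKP equation u_{xt} - (u u_x)_x = u_{y₁y₁} + u_{y₂y₂} on any open set where u > 0 is a smooth implicit solution. -/
open Real
set_option maxHeartbeats 4000000 in

/-- For `n = 2`, the function `u > 0` defined implicitly by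
`u (4 u (ln u) t² - 4 x t + y₁² + y₂²) = C` satisfies the `(1,2)`-dKP equation
`u_{xt} - (u u_x)_x = u_{y₁y₁} + u_{y₂y₂}`. -/
theorem implicit_solution_m1_n2_log
    (C : ℝ)
    (U : Set (ℝ × ℝ × ℝ × ℝ)) (hU : IsOpen U)
    (u : ℝ → ℝ → ℝ → ℝ → ℝ)
    (hu : ContDiff ℝ (⊤ : ℕ∞) (fun q : ℝ × ℝ × ℝ × ℝ => u q.1 q.2.1 q.2.2.1 q.2.2.2))
    (hpos : ∀ x y1 y2 t, (x, y1, y2, t) ∈ U → 0 < u x y1 y2 t)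
    (hrel : ∀ x y1 y2 t, (x, y1, y2, t) ∈ U →
      u x y1 y2 t * (4 * u x y1 y2 t * log (u x y1 y2 t) * t ^ 2
        - 4 * x * t + y1 ^ 2 + y2 ^ 2) = C)
    (hnondeg : ∀ x y1 y2 t, (x, y1, y2, t) ∈ U →
      deriv (fun w : ℝ => w * (4 * w * log w * t ^ 2 - 4 * x * t + y1 ^ 2 + y2 ^ 2))
        (u x y1 y2 t) ≠ 0) :
    ∀ x y1 y2 t, (x, y1, y2, t) ∈ U →
      deriv (fun t' => deriv (fun x' => u x' y1 y2 t') x) t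
        - deriv (fun x' => u x' y1 y2 t * deriv (fun x'' => u x'' y1 y2 t) x') x
      = deriv (fun s => deriv (fun s' => u x s' y2 t) s) y1
        + deriv (fun s => deriv (fun s' => u x y1 s' t) s) y2 := by
  -- nondegeneracy in explicit form
  have hA : ∀ a b1 b2 c, (a, b1, b2, c) ∈ U →
      8 * u a b1 b2 c * c ^ 2 * log (u a b1 b2 c) + 4 * u a b1 b2 c * c ^ 2
        - 4 * a * c + b1 ^ 2 + b2 ^ 2 ≠ 0 := by
    intro a b1 b2 c hm
    have hw : 0 < u a b1 b2 c := hpos _ _ _ _ hm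
    have hnd := hnondeg a b1 b2 c hm
    have hder : HasDerivAt (fun w : ℝ => w * (4 * w * log w * c ^ 2 - 4 * a * c + b1 ^ 2 + b2 ^ 2))
        (1 * (4 * u a b1 b2 c * log (u a b1 b2 c) * c ^ 2 - 4 * a * c + b1 ^ 2 + b2 ^ 2) +
          u a b1 b2 c * ((4 * 1 * log (u a b1 b2 c) + 4 * u a b1 b2 c * (u a b1 b2 c)⁻¹) * c ^ 2))
        (u a b1 b2 c) :=
      (hasDerivAt_id _).mul
        ((((((hasDerivAt_id _).const_mul 4).mul (Real.hasDerivAt_log hw.ne')).mul_const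
          (c ^ 2)).sub_const (4 * a * c)).add_const (b1 ^ 2) |>.add_const (b2 ^ 2))
    rw [hder.deriv] at hnd
    intro h
    apply hnd
    rw [show (1 * (4 * u a b1 b2 c * log (u a b1 b2 c) * c ^ 2 - 4 * a * c + b1 ^ 2 + b2 ^ 2) +
          u a b1 b2 c * ((4 * 1 * log (u a b1 b2 c) + 4 * u a b1 b2 c * (u a b1 b2 c)⁻¹) * c ^ 2))
        = 8 * u a b1 b2 c * c ^ 2 * log (u a b1 b2 c) + 4 * u a b1 b2 c * c ^ 2
          - 4 * a * c + b1 ^ 2 + b2 ^ 2 from by field_simp [hw.ne']; ring, h]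
  -- first derivative in x
  have hdx : ∀ a b1 b2 c, (a, b1, b2, c) ∈ U →
      HasDerivAt (fun s => u s b1 b2 c)
        (4 * c * u a b1 b2 c /
          (8 * u a b1 b2 c * c ^ 2 * log (u a b1 b2 c) + 4 * u a b1 b2 c * c ^ 2
            - 4 * a * c + b1 ^ 2 + b2 ^ 2)) a := by
    intro a b1 b2 c hm
    have hw : 0 < u a b1 b2 c := hpos _ _ _ _ hm
    have hAne := hA a b1 b2 c hm
    have hcd : ContDiff ℝ (⊤ : ℕ∞) (fun s => u s b1 b2 c) :=
      (hu.comp ((contDiff_id.prodMk contDiff_const :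
        ContDiff ℝ (⊤ : ℕ∞) fun s : ℝ => (s, (b1, b2, c)))) : ContDiff ℝ (⊤ : ℕ∞) _)
    have hd : HasDerivAt (fun s => u s b1 b2 c) (deriv (fun s => u s b1 b2 c) a) a :=
      ((hcd.differentiable (by simp)) a).hasDerivAt
    set d := deriv (fun s => u s b1 b2 c) a with hdef
    have hL : HasDerivAt (fun s => log (u s b1 b2 c)) ((u a b1 b2 c)⁻¹ * d) a :=
      by have := (Real.hasDerivAt_log hw.ne').comp a hd; exact this
    have hF : HasDerivAt
        (fun s => u s b1 b2 c * (4 * u s b1 b2 c * log (u s b1 b2 c) * c ^ 2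
          - 4 * s * c + b1 ^ 2 + b2 ^ 2)) _ a :=
      hd.mul ((((((hd.const_mul 4).mul hL).mul_const (c ^ 2)).sub
        (((hasDerivAt_id a).const_mul 4).mul_const c)).add_const (b1 ^ 2)).add_const (b2 ^ 2))
    have hev : (fun s => u s b1 b2 c * (4 * u s b1 b2 c * log (u s b1 b2 c) * c ^ 2
        - 4 * s * c + b1 ^ 2 + b2 ^ 2)) =ᶠ[nhds a] fun _ => C := by
      have hmem : ∀ᶠ s in nhds a, (s, b1, b2, c) ∈ U :=
        (Continuous.continuousAt (by fun_prop)).preimage_mem_nhds (hU.mem_nhds hm)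
      filter_upwards [hmem] with s hs using hrel s b1 b2 c hs
    have heq := hF.unique ((hasDerivAt_const a C).congr_of_eventuallyEq hev)
    have hd' : d = 4 * c * u a b1 b2 c /
        (8 * u a b1 b2 c * c ^ 2 * log (u a b1 b2 c) + 4 * u a b1 b2 c * c ^ 2
          - 4 * a * c + b1 ^ 2 + b2 ^ 2) := by
      rw [eq_div_iff hAne]
      have h2 : d * (8 * u a b1 b2 c * c ^ 2 * log (u a b1 b2 c) + 4 * u a b1 b2 c * c ^ 2
          - 4 * a * c + b1 ^ 2 + b2 ^ 2) - 4 * c * u a b1 b2 c = 0 := by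
        rw [← heq]; field_simp; ring
      linarith
    exact hd' ▸ hd
  -- first derivative in y1
  have hdy1 : ∀ a b1 b2 c, (a, b1, b2, c) ∈ U →
      HasDerivAt (fun s => u a s b2 c)
        (-(2 * b1 * u a b1 b2 c) /
          (8 * u a b1 b2 c * c ^ 2 * log (u a b1 b2 c) + 4 * u a b1 b2 c * c ^ 2
            - 4 * a * c + b1 ^ 2 + b2 ^ 2)) b1 := by
    intro a b1 b2 c hm
    have hw : 0 < u a b1 b2 c := hpos _ _ _ _ hm
    have hAne := hA a b1 b2 c hm
    have hcd : ContDiff ℝ (⊤ : ℕ∞) (fun s => u a s b2 c) :=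
      (hu.comp ((contDiff_const.prodMk (contDiff_id.prodMk contDiff_const) :
        ContDiff ℝ (⊤ : ℕ∞) fun s : ℝ => ((a : ℝ), (s, (b2, c)))))  : ContDiff ℝ (⊤ : ℕ∞) _)
    have hd : HasDerivAt (fun s => u a s b2 c) (deriv (fun s => u a s b2 c) b1) b1 :=
      ((hcd.differentiable (by simp)) b1).hasDerivAt
    set d := deriv (fun s => u a s b2 c) b1 with hdef
    have hL : HasDerivAt (fun s => log (u a s b2 c)) ((u a b1 b2 c)⁻¹ * d) b1 :=
      by have := (Real.hasDerivAt_log hw.ne').comp b1 hd; exact this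
    have hF : HasDerivAt
        (fun s => u a s b2 c * (4 * u a s b2 c * log (u a s b2 c) * c ^ 2
          - 4 * a * c + s ^ 2 + b2 ^ 2)) _ b1 :=
      hd.mul ((((((hd.const_mul 4).mul hL).mul_const (c ^ 2)).sub_const
        (4 * a * c)).add (hasDerivAt_pow 2 b1)).add_const (b2 ^ 2))
    have hev : (fun s => u a s b2 c * (4 * u a s b2 c * log (u a s b2 c) * c ^ 2
        - 4 * a * c + s ^ 2 + b2 ^ 2)) =ᶠ[nhds b1] fun _ => C := by
      have hmem : ∀ᶠ s in nhds b1, (a, s, b2, c) ∈ U :=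
        (Continuous.continuousAt (by fun_prop)).preimage_mem_nhds (hU.mem_nhds hm)
      filter_upwards [hmem] with s hs using hrel a s b2 c hs
    have heq := hF.unique ((hasDerivAt_const b1 C).congr_of_eventuallyEq hev)
    have hd' : d = -(2 * b1 * u a b1 b2 c) /
        (8 * u a b1 b2 c * c ^ 2 * log (u a b1 b2 c) + 4 * u a b1 b2 c * c ^ 2
          - 4 * a * c + b1 ^ 2 + b2 ^ 2) := by
      rw [eq_div_iff hAne]
      have h2 : d * (8 * u a b1 b2 c * c ^ 2 * log (u a b1 b2 c) + 4 * u a b1 b2 c * c ^ 2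
          - 4 * a * c + b1 ^ 2 + b2 ^ 2) + 2 * b1 * u a b1 b2 c = 0 := by
        rw [← heq]; push_cast; field_simp; ring
      linarith
    exact hd' ▸ hd
  -- first derivative in y2
  have hdy2 : ∀ a b1 b2 c, (a, b1, b2, c) ∈ U →
      HasDerivAt (fun s => u a b1 s c)
        (-(2 * b2 * u a b1 b2 c) /
          (8 * u a b1 b2 c * c ^ 2 * log (u a b1 b2 c) + 4 * u a b1 b2 c * c ^ 2
            - 4 * a * c + b1 ^ 2 + b2 ^ 2)) b2 := by
    intro a b1 b2 c hm
    have hw : 0 < u a b1 b2 c := hpos _ _ _ _ hm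
    have hAne := hA a b1 b2 c hm
    have hcd : ContDiff ℝ (⊤ : ℕ∞) (fun s => u a b1 s c) :=
      (hu.comp ((contDiff_const.prodMk (contDiff_const.prodMk (contDiff_id.prodMk contDiff_const)) :
        ContDiff ℝ (⊤ : ℕ∞) fun s : ℝ => ((a : ℝ), ((b1 : ℝ), (s, c)))))  : ContDiff ℝ (⊤ : ℕ∞) _)
    have hd : HasDerivAt (fun s => u a b1 s c) (deriv (fun s => u a b1 s c) b2) b2 :=
      ((hcd.differentiable (by simp)) b2).hasDerivAt
    set d := deriv (fun s => u a b1 s c) b2 with hdef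
    have hL : HasDerivAt (fun s => log (u a b1 s c)) ((u a b1 b2 c)⁻¹ * d) b2 :=
      by have := (Real.hasDerivAt_log hw.ne').comp b2 hd; exact this
    have hF : HasDerivAt
        (fun s => u a b1 s c * (4 * u a b1 s c * log (u a b1 s c) * c ^ 2
          - 4 * a * c + b1 ^ 2 + s ^ 2)) _ b2 :=
      hd.mul ((((((hd.const_mul 4).mul hL).mul_const (c ^ 2)).sub_const
        (4 * a * c)).add_const (b1 ^ 2)).add (hasDerivAt_pow 2 b2))
    have hev : (fun s => u a b1 s c * (4 * u a b1 s c * log (u a b1 s c) * c ^ 2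
        - 4 * a * c + b1 ^ 2 + s ^ 2)) =ᶠ[nhds b2] fun _ => C := by
      have hmem : ∀ᶠ s in nhds b2, (a, b1, s, c) ∈ U :=
        (Continuous.continuousAt (by fun_prop)).preimage_mem_nhds (hU.mem_nhds hm)
      filter_upwards [hmem] with s hs using hrel a b1 s c hs
    have heq := hF.unique ((hasDerivAt_const b2 C).congr_of_eventuallyEq hev)
    have hd' : d = -(2 * b2 * u a b1 b2 c) /
        (8 * u a b1 b2 c * c ^ 2 * log (u a b1 b2 c) + 4 * u a b1 b2 c * c ^ 2
          - 4 * a * c + b1 ^ 2 + b2 ^ 2) := by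
      rw [eq_div_iff hAne]
      have h2 : d * (8 * u a b1 b2 c * c ^ 2 * log (u a b1 b2 c) + 4 * u a b1 b2 c * c ^ 2
          - 4 * a * c + b1 ^ 2 + b2 ^ 2) + 2 * b2 * u a b1 b2 c = 0 := by
        rw [← heq]; push_cast; field_simp; ring
      linarith
    exact hd' ▸ hd
  -- first derivative in t
  have hdt : ∀ a b1 b2 c, (a, b1, b2, c) ∈ U →
      HasDerivAt (fun s => u a b1 b2 s)
        ((4 * a * u a b1 b2 c - 8 * u a b1 b2 c ^ 2 * log (u a b1 b2 c) * c) /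
          (8 * u a b1 b2 c * c ^ 2 * log (u a b1 b2 c) + 4 * u a b1 b2 c * c ^ 2
            - 4 * a * c + b1 ^ 2 + b2 ^ 2)) c := by
    intro a b1 b2 c hm
    have hw : 0 < u a b1 b2 c := hpos _ _ _ _ hm
    have hAne := hA a b1 b2 c hm
    have hcd : ContDiff ℝ (⊤ : ℕ∞) (fun s => u a b1 b2 s) :=
      (hu.comp ((contDiff_const.prodMk (contDiff_const.prodMk (contDiff_const.prodMk contDiff_id)) :
        ContDiff ℝ (⊤ : ℕ∞) fun s : ℝ => ((a : ℝ), ((b1 : ℝ), ((b2 : ℝ), s)))))  : ContDiff ℝ (⊤ : ℕ∞) _)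
    have hd : HasDerivAt (fun s => u a b1 b2 s) (deriv (fun s => u a b1 b2 s) c) c :=
      ((hcd.differentiable (by simp)) c).hasDerivAt
    set d := deriv (fun s => u a b1 b2 s) c with hdef
    have hL : HasDerivAt (fun s => log (u a b1 b2 s)) ((u a b1 b2 c)⁻¹ * d) c :=
      (Real.hasDerivAt_log hw.ne').comp c hd
    have hF : HasDerivAt
        (fun s => u a b1 b2 s * (4 * u a b1 b2 s * log (u a b1 b2 s) * s ^ 2
          - 4 * a * s + b1 ^ 2 + b2 ^ 2)) _ c :=
      hd.mul ((((((hd.const_mul 4).mul hL).mul (hasDerivAt_pow 2 c)).sub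
        ((hasDerivAt_id c).const_mul (4 * a))).add_const
          (b1 ^ 2)).add_const (b2 ^ 2))
    have hev : (fun s => u a b1 b2 s * (4 * u a b1 b2 s * log (u a b1 b2 s) * s ^ 2
        - 4 * a * s + b1 ^ 2 + b2 ^ 2)) =ᶠ[nhds c] fun _ => C := by
      have hmem : ∀ᶠ s in nhds c, (a, b1, b2, s) ∈ U :=
        (Continuous.continuousAt (by fun_prop)).preimage_mem_nhds (hU.mem_nhds hm)
      filter_upwards [hmem] with s hs using hrel a b1 b2 s hs
    have heq := hF.unique ((hasDerivAt_const c C).congr_of_eventuallyEq hev)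
    have hd' : d = (4 * a * u a b1 b2 c - 8 * u a b1 b2 c ^ 2 * log (u a b1 b2 c) * c) /
        (8 * u a b1 b2 c * c ^ 2 * log (u a b1 b2 c) + 4 * u a b1 b2 c * c ^ 2
          - 4 * a * c + b1 ^ 2 + b2 ^ 2) := by
      rw [eq_div_iff hAne]
      have h2 : d * (8 * u a b1 b2 c * c ^ 2 * log (u a b1 b2 c) + 4 * u a b1 b2 c * c ^ 2
          - 4 * a * c + b1 ^ 2 + b2 ^ 2)
          - (4 * a * u a b1 b2 c - 8 * u a b1 b2 c ^ 2 * log (u a b1 b2 c) * c) = 0 := by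
        rw [← heq]; simp only [Pi.mul_apply]; push_cast; field_simp; ring
      linarith
    exact hd' ▸ hd
  -- main computation at the point
  intro x y1 y2 t hmem
  have hw : 0 < u x y1 y2 t := hpos _ _ _ _ hmem
  have hAne := hA x y1 y2 t hmem
  have hWx := hdx x y1 y2 t hmem
  have hWy1 := hdy1 x y1 y2 t hmem
  have hWy2 := hdy2 x y1 y2 t hmem
  have hWt := hdt x y1 y2 t hmem
  have hLx := (Real.hasDerivAt_log hw.ne').comp x hWx
  have hLy1 := (Real.hasDerivAt_log hw.ne').comp y1 hWy1
  have hLy2 := (Real.hasDerivAt_log hw.ne').comp y2 hWy2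
  have hLt := (Real.hasDerivAt_log hw.ne').comp t hWt
  -- term 1 : u_{xt}
  have hev1 : (fun t' => deriv (fun x' => u x' y1 y2 t') x) =ᶠ[nhds t]
      (fun t' => 4 * t' * u x y1 y2 t' /
        (8 * u x y1 y2 t' * t' ^ 2 * log (u x y1 y2 t') + 4 * u x y1 y2 t' * t' ^ 2
          - 4 * x * t' + y1 ^ 2 + y2 ^ 2)) := by
    have hmemt : ∀ᶠ t' in nhds t, (x, y1, y2, t') ∈ U :=
      (Continuous.continuousAt (by fun_prop)).preimage_mem_nhds (hU.mem_nhds hmem)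
    filter_upwards [hmemt] with s hs using (hdx x y1 y2 s hs).deriv
  have hD1 : HasDerivAt (fun t' => 4 * t' * u x y1 y2 t' /
      (8 * u x y1 y2 t' * t' ^ 2 * log (u x y1 y2 t') + 4 * u x y1 y2 t' * t' ^ 2
        - 4 * x * t' + y1 ^ 2 + y2 ^ 2)) _ t :=
    (((hasDerivAt_id t).const_mul 4).mul hWt).div
      (((((((hWt.const_mul 8).mul (hasDerivAt_pow 2 t)).mul hLt).add
        ((hWt.const_mul 4).mul (hasDerivAt_pow 2 t))).sub
        ((hasDerivAt_id t).const_mul (4 * x))).add_const (y1 ^ 2)).add_const (y2 ^ 2)) hAne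
  -- term 2 : (u u_x)_x
  have hev2 : (fun x' => u x' y1 y2 t * deriv (fun x'' => u x'' y1 y2 t) x') =ᶠ[nhds x]
      (fun x' => u x' y1 y2 t * (4 * t * u x' y1 y2 t /
        (8 * u x' y1 y2 t * t ^ 2 * log (u x' y1 y2 t) + 4 * u x' y1 y2 t * t ^ 2
          - 4 * x' * t + y1 ^ 2 + y2 ^ 2))) := by
    have hmemx : ∀ᶠ s in nhds x, (s, y1, y2, t) ∈ U :=
      (Continuous.continuousAt (by fun_prop)).preimage_mem_nhds (hU.mem_nhds hmem)
    filter_upwards [hmemx] with s hs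
    rw [(hdx s y1 y2 t hs).deriv]
  have hD2 : HasDerivAt (fun x' => u x' y1 y2 t * (4 * t * u x' y1 y2 t /
      (8 * u x' y1 y2 t * t ^ 2 * log (u x' y1 y2 t) + 4 * u x' y1 y2 t * t ^ 2
        - 4 * x' * t + y1 ^ 2 + y2 ^ 2))) _ x :=
    hWx.mul ((hWx.const_mul (4 * t)).div
      ((((((hWx.const_mul 8).mul_const (t ^ 2)).mul hLx).add
        ((hWx.const_mul 4).mul_const (t ^ 2))).sub
        (((hasDerivAt_id x).const_mul 4).mul_const t)).add_const (y1 ^ 2) |>.add_const (y2 ^ 2)) hAne)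
  -- term 3 : u_{y1 y1}
  have hev3 : (fun s => deriv (fun s' => u x s' y2 t) s) =ᶠ[nhds y1]
      (fun s => -(2 * s * u x s y2 t) /
        (8 * u x s y2 t * t ^ 2 * log (u x s y2 t) + 4 * u x s y2 t * t ^ 2
          - 4 * x * t + s ^ 2 + y2 ^ 2)) := by
    have hmemy : ∀ᶠ s in nhds y1, (x, s, y2, t) ∈ U :=
      (Continuous.continuousAt (by fun_prop)).preimage_mem_nhds (hU.mem_nhds hmem)
    filter_upwards [hmemy] with s hs using (hdy1 x s y2 t hs).deriv
  have hD3 : HasDerivAt (fun s => -(2 * s * u x s y2 t) /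
      (8 * u x s y2 t * t ^ 2 * log (u x s y2 t) + 4 * u x s y2 t * t ^ 2
        - 4 * x * t + s ^ 2 + y2 ^ 2)) _ y1 :=
    ((((hasDerivAt_id y1).const_mul 2).mul hWy1).neg).div
      ((((((hWy1.const_mul 8).mul_const (t ^ 2)).mul hLy1).add
        ((hWy1.const_mul 4).mul_const (t ^ 2))).sub_const (4 * x * t)).add
        (hasDerivAt_pow 2 y1) |>.add_const (y2 ^ 2)) hAne
  -- term 4 : u_{y2 y2}
  have hev4 : (fun s => deriv (fun s' => u x y1 s' t) s) =ᶠ[nhds y2]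
      (fun s => -(2 * s * u x y1 s t) /
        (8 * u x y1 s t * t ^ 2 * log (u x y1 s t) + 4 * u x y1 s t * t ^ 2
          - 4 * x * t + y1 ^ 2 + s ^ 2)) := by
    have hmemy : ∀ᶠ s in nhds y2, (x, y1, s, t) ∈ U :=
      (Continuous.continuousAt (by fun_prop)).preimage_mem_nhds (hU.mem_nhds hmem)
    filter_upwards [hmemy] with s hs using (hdy2 x y1 s t hs).deriv
  have hD4 : HasDerivAt (fun s => -(2 * s * u x y1 s t) /
      (8 * u x y1 s t * t ^ 2 * log (u x y1 s t) + 4 * u x y1 s t * t ^ 2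
        - 4 * x * t + y1 ^ 2 + s ^ 2)) _ y2 :=
    ((((hasDerivAt_id y2).const_mul 2).mul hWy2).neg).div
      ((((((hWy2.const_mul 8).mul_const (t ^ 2)).mul hLy2).add
        ((hWy2.const_mul 4).mul_const (t ^ 2))).sub_const (4 * x * t)).add_const (y1 ^ 2) |>.add
        (hasDerivAt_pow 2 y2)) hAne
  rw [hev1.deriv_eq, hD1.deriv, hev2.deriv_eq, hD2.deriv, hev3.deriv_eq, hD3.deriv,
    hev4.deriv_eq, hD4.deriv]
  clear hD1 hD2 hD3 hD4 hev1 hev2 hev3 hev4 hLx hLy1 hLy2 hLt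
  clear hWx hWy1 hWy2 hWt hdx hdy1 hdy2 hdt hA hrel hnondeg hpos hu
  set w := u x y1 y2 t with hwd
  set L := log w with hLd
  set A := 8 * w * t ^ 2 * L + 4 * w * t ^ 2 - 4 * x * t + y1 ^ 2 + y2 ^ 2 with hAd
  set ut := (4 * x * w - 8 * w ^ 2 * L * t) / A with hutd
  set ux := 4 * t * w / A with huxd
  set uy1 := -(2 * y1 * w) / A with huy1d
  set uy2 := -(2 * y2 * w) / A with huy2d
  simp only [Pi.mul_apply, Pi.neg_apply, id, Function.comp_apply]
  push_cast
  field_simp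
  rw [hutd, huxd, huy1d, huy2d]
  field_simp
  rw [hAd]
  ring
end

section
/- The map (x, y₁, …, y_n, t) ↦ A·(x, y₁, …, y_n, t)ᵀ together with u ↦ u + c₁² + ⋯ + c_n² - k, where A is the upper-triangular matrix with 1's on the diagonal, first row (1, c₁, …, c_n, k), last column (k, 2c₁, …, 2c_n, 1), and zeros elsewhere, is a symmetry of the equation u_{xt} - (u u_x)_x = Δu: if u solves the equation in the original variables then û solves it in the hatted variables. -/
open scoped BigOperators

/-- The `(1,n)`-dKP equation `u_{xt} - (u u_x)_x = Σᵢ u_{yᵢyᵢ}` for a function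
`u(x, y₁, …, y_n, t)`. -/
def SolvesDKP (n : ℕ) (u : ℝ → (Fin n → ℝ) → ℝ → ℝ) : Prop :=
  ∀ x y t,
    deriv (fun t' => deriv (fun x' => u x' y t') x) t
      - deriv (fun x' => u x' y t * deriv (fun x'' => u x'' y t) x') x
    = ∑ i, deriv (fun s => deriv (fun s' => u x (Function.update y i s') t) s) (y i)

namespace DKPaux

variable {n : ℕ}

abbrev Ev (n : ℕ) := ℝ × (Fin n → ℝ) × ℝ

noncomputable section

def ex : Ev n := (1, 0, 0)
def ey (i : Fin n) : Ev n := (0, Pi.single i 1, 0)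
def et : Ev n := (0, 0, 1)

def Fc (u : ℝ → (Fin n → ℝ) → ℝ → ℝ) (C : ℝ) : Ev n → ℝ :=
  fun q => u q.1 q.2.1 q.2.2 + C

lemma deriv_along {F : Ev n → ℝ} (hF : Differentiable ℝ F)
    {γ : ℝ → Ev n} {w : Ev n} {s : ℝ} (hγ : HasDerivAt γ w s) :
    deriv (fun s' => F (γ s')) s = fderiv ℝ F (γ s) w :=
  ((hF (γ s)).hasFDerivAt.comp_hasDerivAt s hγ).deriv

lemma hasDerivAt_along {F : Ev n → ℝ} (hF : Differentiable ℝ F)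
    {γ : ℝ → Ev n} {w : Ev n} {s : ℝ} (hγ : HasDerivAt γ w s) :
    HasDerivAt (fun s' => F (γ s')) (fderiv ℝ F (γ s) w) s :=
  (hF (γ s)).hasFDerivAt.comp_hasDerivAt s hγ

lemma hasDerivAt_along2 {F : Ev n → ℝ} (hF : ContDiff ℝ (⊤ : ℕ∞) F) (b : Ev n)
    {γ : ℝ → Ev n} {w : Ev n} {s : ℝ} (hγ : HasDerivAt γ w s) :
    HasDerivAt (fun s' => fderiv ℝ F (γ s') b) (fderiv ℝ (fderiv ℝ F) (γ s) w b) s := by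
  have h1 : Differentiable ℝ (fderiv ℝ F) := (hF.fderiv_right (m := 1) (WithTop.coe_le_coe.2 le_top)).differentiable one_ne_zero
  have h2 : Differentiable ℝ (fun q => fderiv ℝ F q b) :=
    h1.clm_apply (differentiable_const b)
  have h3 := hasDerivAt_along h2 hγ
  rwa [fderiv_clm_apply (h1 _) (differentiableAt_const b),
    ContinuousLinearMap.add_apply, ContinuousLinearMap.comp_apply, fderiv_fun_const,
    Pi.zero_apply, ContinuousLinearMap.zero_apply, map_zero, zero_add,
    ContinuousLinearMap.flip_apply] at h3

lemma deriv_along2 {F : Ev n → ℝ} (hF : ContDiff ℝ (⊤ : ℕ∞) F) (b : Ev n)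
    {γ : ℝ → Ev n} {w : Ev n} {s : ℝ} (hγ : HasDerivAt γ w s) :
    deriv (fun s' => fderiv ℝ F (γ s') b) s = fderiv ℝ (fderiv ℝ F) (γ s) w b :=
  (hasDerivAt_along2 hF b hγ).deriv

lemma curve_x (y : Fin n → ℝ) (t x : ℝ) :
    HasDerivAt (fun x' : ℝ => ((x', y, t) : Ev n)) ex x :=
  (hasDerivAt_id x).prodMk (hasDerivAt_const x (y, t))

lemma curve_t (x : ℝ) (y : Fin n → ℝ) (t : ℝ) :
    HasDerivAt (fun t' : ℝ => ((x, y, t') : Ev n)) et t :=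
  (hasDerivAt_const t x).prodMk ((hasDerivAt_const t y).prodMk (hasDerivAt_id t))

lemma curve_y (x t : ℝ) (y : Fin n → ℝ) (i : Fin n) (s : ℝ) :
    HasDerivAt (fun s' : ℝ => ((x, Function.update y i s', t) : Ev n)) (ey i) s :=
  (hasDerivAt_const s x).prodMk ((hasDerivAt_update y i s).prodMk (hasDerivAt_const s t))

lemma solves_expand {Q : Ev n → ℝ} (hQ : ContDiff ℝ (⊤ : ℕ∞) Q)
    (hs : SolvesDKP n (fun x y t => Q (x, y, t))) (x : ℝ) (y : Fin n → ℝ) (t : ℝ) :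
    fderiv ℝ (fderiv ℝ Q) (x, y, t) et ex
      - (fderiv ℝ Q (x, y, t) ex * fderiv ℝ Q (x, y, t) ex
          + Q (x, y, t) * fderiv ℝ (fderiv ℝ Q) (x, y, t) ex ex)
    = ∑ i, fderiv ℝ (fderiv ℝ Q) (x, y, t) (ey i) (ey i) := by
  have hQd : Differentiable ℝ Q := hQ.differentiable (by simp)
  have H := hs x y t
  have e1 : ∀ t' x', deriv (fun x'' => Q (x'', y, t')) x' = fderiv ℝ Q (x', y, t') ex :=
    fun t' x' => deriv_along hQd (curve_x y t' x')
  simp only [e1] at H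
  have e2 : deriv (fun t' => fderiv ℝ Q (x, y, t') ex) t
      = fderiv ℝ (fderiv ℝ Q) (x, y, t) et ex := deriv_along2 hQ ex (curve_t x y t)
  have e3 : deriv (fun x' => Q (x', y, t) * fderiv ℝ Q (x', y, t) ex) x
      = fderiv ℝ Q (x, y, t) ex * fderiv ℝ Q (x, y, t) ex
          + Q (x, y, t) * fderiv ℝ (fderiv ℝ Q) (x, y, t) ex ex :=
    ((hasDerivAt_along hQd (curve_x y t x)).mul (hasDerivAt_along2 hQ ex (curve_x y t x))).deriv
  have e4 : ∀ i s, deriv (fun s' => Q (x, Function.update y i s', t)) s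
      = fderiv ℝ Q (x, Function.update y i s, t) (ey i) :=
    fun i s => deriv_along hQd (curve_y x t y i s)
  simp only [e4] at H
  have e5 : ∀ i : Fin n, deriv (fun s => fderiv ℝ Q (x, Function.update y i s, t) (ey i)) (y i)
      = fderiv ℝ (fderiv ℝ Q) (x, y, t) (ey i) (ey i) := by
    intro i
    have := deriv_along2 hQ (ey i) (curve_y x t y i (y i))
    rwa [Function.update_eq_self] at this
  simp only [e5] at H
  rw [e2, e3] at H
  exact H

end
end DKPaux

open DKPaux

/-- The map `x̂ = x + Σᵢ cᵢ yᵢ + k t`, `ŷᵢ = yᵢ + 2cᵢ t`, `t̂ = t`,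
`û = u + Σᵢ cᵢ² - k` is a symmetry of the `(1,n)`-dKP equation: if `u` solves it in the
original variables, then `û` solves it in the hatted variables. -/
theorem dKP_symmetry
    (n : ℕ) (c : Fin n → ℝ) (k : ℝ)
    (u v : ℝ → (Fin n → ℝ) → ℝ → ℝ)
    (hu : ContDiff ℝ (⊤ : ℕ∞) (fun q : ℝ × (Fin n → ℝ) × ℝ => u q.1 q.2.1 q.2.2))
    (hv : ContDiff ℝ (⊤ : ℕ∞) (fun q : ℝ × (Fin n → ℝ) × ℝ => v q.1 q.2.1 q.2.2))
    (hcomp : ∀ x y t,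
      v (x + (∑ i, c i * y i) + k * t) (fun i => y i + 2 * c i * t) t
        = u x y t + (∑ i, (c i) ^ 2) - k)
    (hsol : SolvesDKP n u) :
    SolvesDKP n v := by
  classical
  set C : ℝ := (∑ i, (c i) ^ 2) - k with hC
  -- the composed function
  have hF : ContDiff ℝ (⊤ : ℕ∞) (Fc u C : Ev n → ℝ) := hu.add contDiff_const
  have hFd : Differentiable ℝ (Fc u C : Ev n → ℝ) := hF.differentiable (by simp)
  -- inversion of the change of variables
  have hv' : ∀ (a : ℝ) (b : Fin n → ℝ) (d : ℝ),
      v a b d = Fc u C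
        (a - (∑ i, c i * b i) + (2 * (∑ i, (c i) ^ 2) - k) * d,
          fun i => b i - 2 * c i * d, d) := by
    intro a b d
    have h1 := hcomp (a - (∑ i, c i * (b i - 2 * c i * d)) - k * d)
      (fun i => b i - 2 * c i * d) d
    have h2 : (a - (∑ i, c i * (b i - 2 * c i * d)) - k * d)
        + (∑ i, c i * (b i - 2 * c i * d)) + k * d = a := by ring
    have h3 : (fun i => (b i - 2 * c i * d) + 2 * c i * d) = b := by funext i; ring
    rw [h2, h3] at h1
    have h4 : a - (∑ i, c i * (b i - 2 * c i * d)) - k * d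
        = a - (∑ i, c i * b i) + (2 * (∑ i, (c i) ^ 2) - k) * d := by
      have : ∑ i, c i * (b i - 2 * c i * d)
          = (∑ i, c i * b i) - (∑ i, (c i) ^ 2) * (2 * d) := by
        rw [Finset.sum_mul, ← Finset.sum_sub_distrib]
        exact Finset.sum_congr rfl fun i _ => by ring
      rw [this]; ring
    rw [h4] at h1
    rw [h1]
    simp only [Fc, hC]
    ring
  -- the u equation in fderiv form
  have hU : ContDiff ℝ (⊤ : ℕ∞) (fun q : Ev n => u q.1 q.2.1 q.2.2) := hu
  have hueq := solves_expand (n := n) hU hsol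
  -- relation between derivatives of Fc u C and of the uncurried u
  have hFU : fderiv ℝ (Fc u C : Ev n → ℝ) = fderiv ℝ (fun q : Ev n => u q.1 q.2.1 q.2.2) :=
    funext fun q => fderiv_add_const C
  intro X Y T
  set K : ℝ := 2 * (∑ i, (c i) ^ 2) - k with hK
  set p : Ev n := (X - (∑ i, c i * Y i) + K * T, fun i => Y i - 2 * c i * T, T) with hp
  set wt : Ev n := (K, fun i => -(2 * c i), 1) with hwt
  set wy : Fin n → Ev n := fun i => (-(c i), Pi.single i 1, 0) with hwy
  -- curves
  have hδx : ∀ t' x₀ : ℝ, HasDerivAt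
      (fun x' : ℝ => ((x' - (∑ i, c i * Y i) + K * t', fun i => Y i - 2 * c i * t', t') : Ev n))
      ex x₀ := by
    intro t' x₀
    exact (((hasDerivAt_id x₀).sub_const _).add_const _).prodMk (hasDerivAt_const _ _)
  have hδt : HasDerivAt
      (fun t' : ℝ => ((X - (∑ i, c i * Y i) + K * t', fun i => Y i - 2 * c i * t', t') : Ev n))
      wt T := by
    refine HasDerivAt.prodMk ?_ (HasDerivAt.prodMk ?_ (hasDerivAt_id T))
    · exact (((hasDerivAt_id T).const_mul K).const_add
        (X - (∑ i, c i * Y i))).congr_deriv (mul_one K)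
    · refine hasDerivAt_pi.2 fun i => ?_
      simpa using (((hasDerivAt_id T).const_mul (2 * c i)).const_sub (Y i)).const_add (Y i - Y i) |>.congr_deriv rfl
  have hδy : ∀ (i : Fin n) (s₀ : ℝ), HasDerivAt
      (fun s' : ℝ => ((X - (∑ j, c j * Function.update Y i s' j) + K * T,
        fun j => Function.update Y i s' j - 2 * c j * T, T) : Ev n)) (wy i) s₀ := by
    intro i s₀
    refine HasDerivAt.prodMk ?_ (HasDerivAt.prodMk ?_ (hasDerivAt_const _ _))
    · have hsum : HasDerivAt (fun s' : ℝ => ∑ j, c j * Function.update Y i s' j)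
          (∑ j, if j = i then c i else 0) s₀ := by
        refine HasDerivAt.fun_sum fun j _ => ?_
        by_cases h : j = i
        · subst h
          simpa [Function.update_apply] using (hasDerivAt_id s₀).const_mul (c j)
        · simpa [Function.update_apply, h] using hasDerivAt_const s₀ (c j * Y j)
      have : (∑ j, if j = i then c i else 0) = c i := by simp
      rw [this] at hsum
      simpa using (hsum.const_sub X).add_const (K * T)
    · refine hasDerivAt_pi.2 fun j => ?_
      by_cases h : j = i
      · subst h
        simpa [Function.update_apply, Pi.single_apply] using
          (hasDerivAt_id s₀).sub_const (2 * c j * T)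
      · simpa [Function.update_apply, h, Pi.single_apply] using
          hasDerivAt_const s₀ (Y j - 2 * c j * T)
  -- expand the v-equation
  simp only [hv']
  have f1 : ∀ t' x₀ : ℝ, deriv (fun x' =>
      Fc u C ((x' - (∑ i, c i * Y i) + K * t', fun i => Y i - 2 * c i * t', t') : Ev n)) x₀
      = fderiv ℝ (Fc u C)
          ((x₀ - (∑ i, c i * Y i) + K * t', fun i => Y i - 2 * c i * t', t') : Ev n) ex :=
    fun t' x₀ => deriv_along hFd (hδx t' x₀)
  simp only [f1]
  have f2 : deriv (fun t' => fderiv ℝ (Fc u C)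
      ((X - (∑ i, c i * Y i) + K * t', fun i => Y i - 2 * c i * t', t') : Ev n) ex) T
      = fderiv ℝ (fderiv ℝ (Fc u C)) p wt ex := deriv_along2 hF ex hδt
  have f3 : deriv (fun x' =>
      Fc u C ((x' - (∑ i, c i * Y i) + K * T, fun i => Y i - 2 * c i * T, T) : Ev n)
        * fderiv ℝ (Fc u C)
          ((x' - (∑ i, c i * Y i) + K * T, fun i => Y i - 2 * c i * T, T) : Ev n) ex) X
      = fderiv ℝ (Fc u C) p ex * fderiv ℝ (Fc u C) p ex
          + Fc u C p * fderiv ℝ (fderiv ℝ (Fc u C)) p ex ex :=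
    ((hasDerivAt_along hFd (hδx T X)).mul (hasDerivAt_along2 hF ex (hδx T X))).deriv
  have f4 : ∀ (i : Fin n) (s : ℝ), deriv (fun s' =>
      Fc u C ((X - (∑ j, c j * Function.update Y i s' j) + K * T,
        fun j => Function.update Y i s' j - 2 * c j * T, T) : Ev n)) s
      = fderiv ℝ (Fc u C) ((X - (∑ j, c j * Function.update Y i s j) + K * T,
          fun j => Function.update Y i s j - 2 * c j * T, T) : Ev n) (wy i) :=
    fun i s => deriv_along hFd (hδy i s)
  simp only [f4]
  have f5 : ∀ i : Fin n, deriv (fun s => fderiv ℝ (Fc u C)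
      ((X - (∑ j, c j * Function.update Y i s j) + K * T,
        fun j => Function.update Y i s j - 2 * c j * T, T) : Ev n) (wy i)) (Y i)
      = fderiv ℝ (fderiv ℝ (Fc u C)) p (wy i) (wy i) := by
    intro i
    have := deriv_along2 hF (wy i) (hδy i (Y i))
    rwa [Function.update_eq_self] at this
  simp only [f5]
  rw [f2, f3]
  -- now pure multilinear algebra
  rw [hFU]
  set B := fderiv ℝ (fderiv ℝ (fun q : Ev n => u q.1 q.2.1 q.2.2)) p with hB
  set g := fderiv ℝ (fun q : Ev n => u q.1 q.2.1 q.2.2) p with hg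
  have hsym : IsSymmSndFDerivAt ℝ (fun q : Ev n => u q.1 q.2.1 q.2.2) p :=
    hU.contDiffAt.isSymmSndFDerivAt (by simp; exact WithTop.coe_le_coe.2 le_top)
  have hsymi : ∀ i : Fin n, B (ey i) ex = B ex (ey i) := fun i => hsym.eq _ _
  have hwy2 : ∀ i : Fin n, wy i = (-(c i)) • (ex : Ev n) + ey i := by
    intro i
    simp [hwy, ex, ey, Prod.ext_iff]
  have hwt2 : wt = K • (ex : Ev n) + (∑ i, (-(2 * c i)) • ey i) + et := by
    simp only [hwt, ex, ey, et, Prod.smul_mk, smul_eq_mul, mul_one, mul_zero, smul_zero,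
      Prod.mk_add_mk, Prod.ext_iff, funext_iff]
    refine ⟨by simp [Prod.fst_sum], fun j => ?_, by simp [Prod.snd_sum]⟩
    simp [Prod.fst_sum, Prod.snd_sum, Finset.sum_apply, Pi.single_apply, mul_ite]
  have hterm : ∀ i : Fin n, B (wy i) (wy i)
      = c i ^ 2 * B ex ex - 2 * (c i * B ex (ey i)) + B (ey i) (ey i) := by
    intro i
    rw [hwy2 i]
    simp only [map_add, map_smul, ContinuousLinearMap.add_apply,
      ContinuousLinearMap.smul_apply, smul_eq_mul]
    rw [hsymi i]
    ring
  have hwtB : B wt ex = K * B ex ex + (∑ i, -(2 * (c i * B ex (ey i)))) + B et ex := by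
    rw [hwt2]
    simp only [map_add, map_smul, map_sum, ContinuousLinearMap.add_apply,
      ContinuousLinearMap.smul_apply, ContinuousLinearMap.coe_sum', Finset.sum_apply,
      smul_eq_mul]
    simp only [hsymi]
    congr 2
    exact Finset.sum_congr rfl fun i _ => by ring
  have hueq' := hueq (X - (∑ i, c i * Y i) + K * T) (fun i => Y i - 2 * c i * T) T
  rw [← hp, ← hB, ← hg] at hueq'
  have hFp : Fc u C p = u p.1 p.2.1 p.2.2 + C := rfl
  rw [hwtB, hFp]
  simp only [hterm]
  rw [Finset.sum_add_distrib, Finset.sum_sub_distrib, ← Finset.sum_mul, ← Finset.mul_sum,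
    Finset.sum_neg_distrib, ← Finset.mul_sum]
  rw [hK, hC]
  linear_combination hueq'
end

section
/- Let u(x,t) be a smooth solution of u_{xt} - u u_{xx} + κ u_x² = 0 with u_{xx} ≠ 0, and define the partial Legendre transform p = u_x, H(p,t) = u - x u_x (so x = -H_p, u = H - p H_p, u_t = H_t). Then H satisfies the linear PDE H_{pt} + p H_p - H - κ p² H_{pp} = 0. -/
open Filter Topology

/-- Chain rule: derivative of a smooth two-variable function along a curve. -/
lemma chain_aux {G : ℝ × ℝ → ℝ} (hG : Differentiable ℝ G)
    {γ : ℝ → ℝ × ℝ} {v : ℝ × ℝ} {s : ℝ} (hγ : HasDerivAt γ v s) :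
    HasDerivAt (fun r => G (γ r)) (fderiv ℝ G (γ s) v) s :=
  (hG (γ s)).hasFDerivAt.comp_hasDerivAt s hγ

lemma lin_aux (L : ℝ × ℝ →L[ℝ] ℝ) (a b : ℝ) :
    L (a, b) = a * L (1, 0) + b * L (0, 1) := by
  have h : ((a, b) : ℝ × ℝ) = a • ((1 : ℝ), (0 : ℝ)) + b • ((0 : ℝ), (1 : ℝ)) := by
    simp [Prod.ext_iff]
  rw [h, map_add, map_smul, map_smul, smul_eq_mul, smul_eq_mul]

/-- if `u(x,t)` solves `u_{xt} - u u_{xx} + κ u_x² = 0` with `u_{xx} ≠ 0`,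
and `H(p,t) = u - x u_x` is the partial Legendre transform (with `p = u_x`, i.e.
`x = ξ(p,t)` inverting `p = u_x(x,t)`), then `H` satisfies the linear PDE
`H_{pt} + p H_p - H - κ p² H_{pp} = 0`. -/
theorem legendre_transform_linearises
    (κ : ℝ) (u : ℝ → ℝ → ℝ)
    (hu : ContDiff ℝ (⊤ : ℕ∞) (fun q : ℝ × ℝ => u q.1 q.2))
    (hPDE : ∀ x t,
      deriv (fun t' => deriv (fun x' => u x' t') x) t
        - u x t * deriv (fun x' => deriv (fun x'' => u x'' t) x') x
        + κ * (deriv (fun x' => u x' t) x) ^ 2 = 0)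
    (S : Set (ℝ × ℝ)) (hS : IsOpen S)
    (ξ : ℝ → ℝ → ℝ)
    (hξ : ContDiff ℝ (⊤ : ℕ∞) (fun q : ℝ × ℝ => ξ q.1 q.2))
    (hinv : ∀ p t, (p, t) ∈ S → deriv (fun x => u x t) (ξ p t) = p)
    (hxx : ∀ p t, (p, t) ∈ S →
      deriv (fun x' => deriv (fun x => u x t) x') (ξ p t) ≠ 0)
    (H : ℝ → ℝ → ℝ)
    (hH : ∀ p t, H p t = u (ξ p t) t - ξ p t * p) :
    ∀ p t, (p, t) ∈ S →
      deriv (fun t' => deriv (fun p' => H p' t') p) t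
        + p * deriv (fun p' => H p' t) p - H p t
        - κ * p ^ 2 * deriv (fun p' => deriv (fun p'' => H p'' t) p') p = 0 := by
  set U : ℝ × ℝ → ℝ := fun q => u q.1 q.2 with hUdef
  have hUd : Differentiable ℝ U := hu.differentiable (by simp)
  set Ux : ℝ × ℝ → ℝ := fun q => fderiv ℝ U q (1, 0) with hUxdef
  have hUx_smooth : ContDiff ℝ (⊤ : ℕ∞) Ux :=
    (hu.fderiv_right (by simp)).clm_apply contDiff_const
  have hUxd : Differentiable ℝ Ux := hUx_smooth.differentiable (by simp)
  have hΞd : Differentiable ℝ (fun q : ℝ × ℝ => ξ q.1 q.2) := hξ.differentiable (by simp)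
  -- curves
  have hxline : ∀ x t : ℝ, HasDerivAt (fun x' => ((x', t) : ℝ × ℝ)) (1, 0) x :=
    fun x t => (hasDerivAt_id x).prodMk (hasDerivAt_const x t)
  have htline : ∀ x t : ℝ, HasDerivAt (fun t' => ((x, t') : ℝ × ℝ)) (0, 1) t :=
    fun x t => (hasDerivAt_const t x).prodMk (hasDerivAt_id t)
  -- first partial in x
  have huxHas : ∀ x t : ℝ, HasDerivAt (fun x' => u x' t) (Ux (x, t)) x :=
    fun x t => chain_aux hUd (hxline x t)
  have hux : ∀ x t : ℝ, deriv (fun x' => u x' t) x = Ux (x, t) :=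
    fun x t => (huxHas x t).deriv
  -- second partials
  have huxxHas : ∀ x t : ℝ, HasDerivAt (fun x' => Ux (x', t)) (fderiv ℝ Ux (x, t) (1, 0)) x :=
    fun x t => chain_aux hUxd (hxline x t)
  have huxtHas : ∀ x t : ℝ, HasDerivAt (fun t' => Ux (x, t')) (fderiv ℝ Ux (x, t) (0, 1)) t :=
    fun x t => chain_aux hUxd (htline x t)
  -- restated PDE
  have hPDE' : ∀ x t : ℝ,
      fderiv ℝ Ux (x, t) (0, 1) - u x t * fderiv ℝ Ux (x, t) (1, 0)
        + κ * (Ux (x, t)) ^ 2 = 0 := by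
    intro x t
    have h0 := hPDE x t
    have e1 : deriv (fun t' => deriv (fun x' => u x' t') x) t = fderiv ℝ Ux (x, t) (0, 1) := by
      have : (fun t' => deriv (fun x' => u x' t') x) = fun t' => Ux (x, t') := by
        funext t'; exact hux x t'
      rw [this, (huxtHas x t).deriv]
    have e2 : deriv (fun x' => deriv (fun x'' => u x'' t) x') x = fderiv ℝ Ux (x, t) (1, 0) := by
      have : (fun x' => deriv (fun x'' => u x'' t) x') = fun x' => Ux (x', t) := by
        funext x'; exact hux x' t
      rw [this, (huxxHas x t).deriv]
    rw [e1, e2, hux x t] at h0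
    exact h0
  intro p t hpt
  -- partials of ξ
  have hξpHas : ∀ p' t' : ℝ,
      HasDerivAt (fun p'' => ξ p'' t') (fderiv ℝ (fun q : ℝ × ℝ => ξ q.1 q.2) (p', t') (1, 0)) p' :=
    fun p' t' => chain_aux hΞd (hxline p' t')
  have hξtHas : ∀ p' t' : ℝ,
      HasDerivAt (fun t'' => ξ p' t'') (fderiv ℝ (fun q : ℝ × ℝ => ξ q.1 q.2) (p', t') (0, 1)) t' :=
    fun p' t' => chain_aux hΞd (htline p' t')
  set ζp : ℝ := fderiv ℝ (fun q : ℝ × ℝ => ξ q.1 q.2) (p, t) (1, 0) with hζp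
  set ζt : ℝ := fderiv ℝ (fun q : ℝ × ℝ => ξ q.1 q.2) (p, t) (0, 1) with hζt
  -- eventual membership
  have hev_p : ∀ᶠ p' in 𝓝 p, (p', t) ∈ S :=
    (continuous_id.prodMk continuous_const).continuousAt.preimage_mem_nhds (hS.mem_nhds hpt)
  have hev_t : ∀ᶠ t' in 𝓝 t, (p, t') ∈ S :=
    (continuous_const.prodMk continuous_id).continuousAt.preimage_mem_nhds (hS.mem_nhds hpt)
  -- H_p = -ξ on S
  have hHp : ∀ p' t' : ℝ, (p', t') ∈ S →
      HasDerivAt (fun p'' => H p'' t') (-(ξ p' t')) p' := by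
    intro p' t' h
    have hξp' := hξpHas p' t'
    have h1 : HasDerivAt (fun p'' => u (ξ p'' t') t')
        (fderiv ℝ U (ξ p' t', t') (fderiv ℝ (fun q : ℝ × ℝ => ξ q.1 q.2) (p', t') (1, 0), 0)) p' :=
      chain_aux hUd (hξp'.prodMk (hasDerivAt_const p' t'))
    have h2 : HasDerivAt (fun p'' => ξ p'' t' * p'')
        (fderiv ℝ (fun q : ℝ × ℝ => ξ q.1 q.2) (p', t') (1, 0) * p' + ξ p' t') p' := by
      simpa using HasDerivAt.fun_mul hξp' (hasDerivAt_id p')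
    have h3 := HasDerivAt.fun_sub h1 h2
    have hval : fderiv ℝ U (ξ p' t', t')
        (fderiv ℝ (fun q : ℝ × ℝ => ξ q.1 q.2) (p', t') (1, 0), 0)
        - (fderiv ℝ (fun q : ℝ × ℝ => ξ q.1 q.2) (p', t') (1, 0) * p' + ξ p' t')
        = -(ξ p' t') := by
      rw [lin_aux]
      have : (fderiv ℝ U (ξ p' t', t')) (1, 0) = p' := by
        have h4 := hinv p' t' h
        rw [hux (ξ p' t') t'] at h4
        exact h4
      rw [this]; ring
    rw [hval] at h3
    have hfun : (fun p'' => u (ξ p'' t') t' - ξ p'' t' * p'') = fun p'' => H p'' t' := by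
      funext p''; rw [hH]
    rwa [hfun] at h3
  -- H_pp
  have hHpp : deriv (fun p' => deriv (fun p'' => H p'' t) p') p = -ζp := by
    have hE : (fun p' => deriv (fun p'' => H p'' t) p') =ᶠ[𝓝 p] fun p' => -(ξ p' t) :=
      hev_p.mono fun p' h => (hHp p' t h).deriv
    rw [hE.deriv_eq]
    exact ((hξpHas p t).neg).deriv
  -- H_pt
  have hHpt : deriv (fun t' => deriv (fun p' => H p' t') p) t = -ζt := by
    have hE : (fun t' => deriv (fun p' => H p' t') p) =ᶠ[𝓝 t] fun t' => -(ξ p t') :=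
      hev_t.mono fun t' h => (hHp p t' h).deriv
    rw [hE.deriv_eq]
    exact ((hξtHas p t).neg).deriv
  -- abbreviations for second partials of u at the point
  set a : ℝ := fderiv ℝ Ux (ξ p t, t) (1, 0) with ha_def
  set b : ℝ := fderiv ℝ Ux (ξ p t, t) (0, 1) with hb_def
  -- a ≠ 0
  have ha : a ≠ 0 := by
    have h0 := hxx p t hpt
    have hfun : (fun x' => deriv (fun x => u x t) x') = fun x' => Ux (x', t) := by
      funext x'; exact hux x' t
    rw [hfun, (huxxHas (ξ p t) t).deriv] at h0
    exact h0
  -- Ux at the point is p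
  have hUxp : Ux (ξ p t, t) = p := by
    have h4 := hinv p t hpt
    rw [hux (ξ p t) t] at h4
    exact h4
  -- differentiate hinv in p : ζp * a = 1
  have e1 : ζp * a = 1 := by
    have hcomp : HasDerivAt (fun p' => Ux (ξ p' t, t))
        (fderiv ℝ Ux (ξ p t, t) (ζp, 0)) p :=
      chain_aux hUxd ((hξpHas p t).prodMk (hasDerivAt_const p t))
    have hE : (fun p' => Ux (ξ p' t, t)) =ᶠ[𝓝 p] fun p' => p' :=
      hev_p.mono fun p' h => by
        have h4 := hinv p' t h
        rw [hux (ξ p' t) t] at h4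
        exact h4
    have := hcomp.deriv
    rw [hE.deriv_eq, deriv_id''] at this
    rw [lin_aux] at this
    simpa using this.symm
  -- differentiate hinv in t : ζt * a + b = 0
  have e2 : ζt * a + b = 0 := by
    have hcomp : HasDerivAt (fun t' => Ux (ξ p t', t'))
        (fderiv ℝ Ux (ξ p t, t) (ζt, 1)) t :=
      chain_aux hUxd ((hξtHas p t).prodMk (hasDerivAt_id t))
    have hE : (fun t' => Ux (ξ p t', t')) =ᶠ[𝓝 t] fun _ => p :=
      hev_t.mono fun t' h => by
        have h4 := hinv p t' h
        rw [hux (ξ p t') t'] at h4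
        exact h4
    have := hcomp.deriv
    rw [hE.deriv_eq, deriv_const] at this
    rw [lin_aux] at this
    simpa using this.symm
  -- PDE at the point
  have hP : b - u (ξ p t) t * a + κ * p ^ 2 = 0 := by
    have := hPDE' (ξ p t) t
    rwa [hUxp] at this
  rw [hHpt, hHpp, (hHp p t hpt).deriv, hH p t]
  have key : (-ζt + p * -(ξ p t) - (u (ξ p t) t - ξ p t * p) - κ * p ^ 2 * -ζp) * a = 0 := by
    linear_combination hP - e2 + κ * p ^ 2 * e1
  exact (mul_eq_zero.mp key).resolve_right ha
end

section
/- Let H(p,t) be a solution of H_{pt} + p H_p - H - κ p² H_{pp} = 0 with H_{pp} ≠ 0, and define u implicitly by u = H - p H_p, x = -H_p. Then u, as a function of (x,t), satisfies u_{xt} - u u_{xx} + κ u_x² = 0 with u_x = p. -/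
open Filter Topology

noncomputable def PD1 (F : ℝ × ℝ → ℝ) (q : ℝ × ℝ) : ℝ := fderiv ℝ F q (1, 0)
noncomputable def PD2 (F : ℝ × ℝ → ℝ) (q : ℝ × ℝ) : ℝ := fderiv ℝ F q (0, 1)

theorem contDiff_PD1 {F : ℝ × ℝ → ℝ} {n m : WithTop ℕ∞} (hF : ContDiff ℝ n F) (h : m + 1 ≤ n) :
    ContDiff ℝ m (PD1 F) := (hF.fderiv_right h).clm_apply contDiff_const

theorem hasDerivAt_comp2 (F : ℝ × ℝ → ℝ) (hF : Differentiable ℝ F)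
    {g h : ℝ → ℝ} {g' h' s : ℝ} (hg : HasDerivAt g g' s) (hh : HasDerivAt h h' s) :
    HasDerivAt (fun s' => F (g s', h s'))
      (g' * PD1 F (g s, h s) + h' * PD2 F (g s, h s)) s := by
  have hc := (hF (g s, h s)).hasFDerivAt.comp_hasDerivAt s (hg.prodMk hh)
  refine hc.congr_deriv ?_
  have e : (g', h') = g' • ((1:ℝ), (0:ℝ)) + h' • ((0:ℝ), (1:ℝ)) := by simp
  rw [e, map_add, map_smul, map_smul]
  simp [PD1, PD2]

/-- if `H(p,t)` solves `H_{pt} + p H_p - H - κ p² H_{pp} = 0` with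
`H_{pp} ≠ 0`, and `u(x,t) = H(p,t) - p H_p(p,t)` with `p = P(x,t)` solving `x = -H_p(p,t)`,
then `u` satisfies `u_x = p` and `u_{xt} - u u_{xx} + κ u_x² = 0`. -/
theorem inverse_legendre_transform
    (κ : ℝ) (H : ℝ → ℝ → ℝ)
    (hH : ContDiff ℝ 3 (fun q : ℝ × ℝ => H q.1 q.2))
    (hPDE : ∀ p t,
      deriv (fun t' => deriv (fun p' => H p' t') p) t
        + p * deriv (fun p' => H p' t) p - H p t
        - κ * p ^ 2 * deriv (fun p' => deriv (fun p'' => H p'' t) p') p = 0)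
    (S : Set (ℝ × ℝ)) (hS : IsOpen S)
    (P : ℝ → ℝ → ℝ)
    (hP : ContDiff ℝ (⊤ : ℕ∞) (fun q : ℝ × ℝ => P q.1 q.2))
    (hinv : ∀ x t, (x, t) ∈ S → -(deriv (fun p' => H p' t) (P x t)) = x)
    (hpp : ∀ x t, (x, t) ∈ S →
      deriv (fun p' => deriv (fun p'' => H p'' t) p') (P x t) ≠ 0)
    (u : ℝ → ℝ → ℝ)
    (hu : ∀ x t, u x t = H (P x t) t - P x t * deriv (fun p' => H p' t) (P x t)) :
    ∀ x t, (x, t) ∈ S →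
      deriv (fun x' => u x' t) x = P x t
      ∧ deriv (fun t' => deriv (fun x' => u x' t') x) t
          - u x t * deriv (fun x' => deriv (fun x'' => u x'' t) x') x
          + κ * (deriv (fun x' => u x' t) x) ^ 2 = 0 := by
  set G : ℝ × ℝ → ℝ := fun q => H q.1 q.2 with hGdef
  set Q : ℝ × ℝ → ℝ := fun q => P q.1 q.2 with hQdef
  have hGd : Differentiable ℝ G := hH.differentiable (by norm_num)
  have hHp2 : ContDiff ℝ 2 (PD1 G) := contDiff_PD1 hH (by norm_num)
  have hHpd : Differentiable ℝ (PD1 G) := hHp2.differentiable (by norm_num)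
  have hQd : Differentiable ℝ Q := hP.differentiable (by simp)
  -- basic one-variable derivative facts
  have hDp : ∀ p s, HasDerivAt (fun p' => H p' s) (PD1 G (p, s)) p := by
    intro p s
    simpa using hasDerivAt_comp2 G hGd (hasDerivAt_id p) (hasDerivAt_const p s)
  have hDpp : ∀ p s, HasDerivAt (fun p' => PD1 G (p', s)) (PD1 (PD1 G) (p, s)) p := by
    intro p s
    simpa using hasDerivAt_comp2 (PD1 G) hHpd (hasDerivAt_id p) (hasDerivAt_const p s)
  have hDpt : ∀ p s, HasDerivAt (fun s' => PD1 G (p, s')) (PD2 (PD1 G) (p, s)) s := by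
    intro p s
    simpa using hasDerivAt_comp2 (PD1 G) hHpd (hasDerivAt_const s p) (hasDerivAt_id s)
  have hPx : ∀ y s, HasDerivAt (fun x' => P x' s) (PD1 Q (y, s)) y := by
    intro y s
    simpa using hasDerivAt_comp2 Q hQd (hasDerivAt_id y) (hasDerivAt_const y s)
  have hPt : ∀ y s, HasDerivAt (fun s' => P y s') (PD2 Q (y, s)) s := by
    intro y s
    simpa using hasDerivAt_comp2 Q hQd (hasDerivAt_const s y) (hasDerivAt_id s)
  -- rewriting second p-derivative
  have e2 : ∀ p s, deriv (fun p' => deriv (fun p'' => H p'' s) p') p = PD1 (PD1 G) (p, s) := by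
    intro p s
    have hfe : (fun p' => deriv (fun p'' => H p'' s) p') = fun p' => PD1 G (p', s) :=
      funext fun p' => (hDp p' s).deriv
    rw [hfe]
    exact (hDpp p s).deriv
  -- PDE in PD form
  have hPDE' : ∀ p s, PD2 (PD1 G) (p, s) + p * PD1 G (p, s) - H p s
      - κ * p ^ 2 * PD1 (PD1 G) (p, s) = 0 := by
    intro p s
    have h := hPDE p s
    have hfe : (fun t' => deriv (fun p' => H p' t') p) = fun t' => PD1 G (p, t') :=
      funext fun t' => (hDp p t').deriv
    rw [hfe, (hDpt p s).deriv, (hDp p s).deriv, e2 p s] at h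
    exact h
  -- global derivative of u in x
  have hux : ∀ y s, HasDerivAt (fun x' => u x' s)
      (-(P y s * (PD1 Q (y, s) * PD1 (PD1 G) (P y s, s)))) y := by
    intro y s
    have hfe : (fun x' => u x' s) = fun x' => G (P x' s, s) - P x' s * PD1 G (P x' s, s) := by
      funext x'
      rw [hu x' s, (hDp (P x' s) s).deriv]
    rw [hfe]
    have hA : HasDerivAt (fun x' => G (P x' s, s))
        (PD1 Q (y, s) * PD1 G (P y s, s) + 0 * PD2 G (P y s, s)) y :=
      hasDerivAt_comp2 G hGd (hPx y s) (hasDerivAt_const y s)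
    have hB : HasDerivAt (fun x' => PD1 G (P x' s, s))
        (PD1 Q (y, s) * PD1 (PD1 G) (P y s, s) + 0 * PD2 (PD1 G) (P y s, s)) y :=
      hasDerivAt_comp2 (PD1 G) hHpd (hPx y s) (hasDerivAt_const y s)
    have hC := hA.sub ((hPx y s).mul hB)
    refine hC.congr_deriv ?_
    ring
  -- implicit differentiation of hinv on S, in x
  have fact1 : ∀ y s, (y, s) ∈ S → PD1 Q (y, s) * PD1 (PD1 G) (P y s, s) = -1 := by
    intro y s hyS
    have hmem : {x' : ℝ | (x', s) ∈ S} ∈ 𝓝 y :=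
      (hS.preimage (continuous_id.prodMk continuous_const)).mem_nhds hyS
    have hA : HasDerivAt (fun x' => PD1 G (P x' s, s))
        (PD1 Q (y, s) * PD1 (PD1 G) (P y s, s) + 0 * PD2 (PD1 G) (P y s, s)) y :=
      hasDerivAt_comp2 (PD1 G) hHpd (hPx y s) (hasDerivAt_const y s)
    have hev : (fun x' : ℝ => -x') =ᶠ[𝓝 y] (fun x' => PD1 G (P x' s, s)) := by
      filter_upwards [hmem] with x' hx'
      have h := hinv x' s hx'
      rw [(hDp (P x' s) s).deriv] at h
      linarith
    have hB : HasDerivAt (fun x' : ℝ => -x')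
        (PD1 Q (y, s) * PD1 (PD1 G) (P y s, s) + 0 * PD2 (PD1 G) (P y s, s)) y :=
      hA.congr_of_eventuallyEq hev
    have hC : HasDerivAt (fun x' : ℝ => -x') (-1) y := (hasDerivAt_id y).neg
    have := hB.unique hC
    linarith
  -- implicit differentiation of hinv on S, in t
  have fact2 : ∀ y s, (y, s) ∈ S →
      PD2 Q (y, s) * PD1 (PD1 G) (P y s, s) + PD2 (PD1 G) (P y s, s) = 0 := by
    intro y s hyS
    have hmem : {s' : ℝ | (y, s') ∈ S} ∈ 𝓝 s :=
      (hS.preimage (continuous_const.prodMk continuous_id)).mem_nhds hyS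
    have hA : HasDerivAt (fun s' => PD1 G (P y s', s'))
        (PD2 Q (y, s) * PD1 (PD1 G) (P y s, s) + 1 * PD2 (PD1 G) (P y s, s)) s :=
      hasDerivAt_comp2 (PD1 G) hHpd (hPt y s) (hasDerivAt_id s)
    have hev : (fun _ : ℝ => -y) =ᶠ[𝓝 s] (fun s' => PD1 G (P y s', s')) := by
      filter_upwards [hmem] with s' hs'
      have h := hinv y s' hs'
      rw [(hDp (P y s') s').deriv] at h
      linarith
    have hB : HasDerivAt (fun _ : ℝ => -y)
        (PD2 Q (y, s) * PD1 (PD1 G) (P y s, s) + 1 * PD2 (PD1 G) (P y s, s)) s :=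
      hA.congr_of_eventuallyEq hev
    have := hB.unique (hasDerivAt_const s (-y))
    linarith
  -- u_x = P on S
  have hux' : ∀ y s, (y, s) ∈ S → HasDerivAt (fun x' => u x' s) (P y s) y := by
    intro y s hyS
    have h := hux y s
    rw [fact1 y s hyS] at h
    simpa using h
  intro x t hxt
  have hmemx : {x' : ℝ | (x', t) ∈ S} ∈ 𝓝 x :=
    (hS.preimage (continuous_id.prodMk continuous_const)).mem_nhds hxt
  have hmemt : {t' : ℝ | (x, t') ∈ S} ∈ 𝓝 t :=
    (hS.preimage (continuous_const.prodMk continuous_id)).mem_nhds hxt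
  have ux_eq : deriv (fun x' => u x' t) x = P x t := (hux' x t hxt).deriv
  have uxx_eq : deriv (fun x' => deriv (fun x'' => u x'' t) x') x = PD1 Q (x, t) := by
    have hev : (fun x' => deriv (fun x'' => u x'' t) x') =ᶠ[𝓝 x] (fun x' => P x' t) := by
      filter_upwards [hmemx] with x' hx'
      exact (hux' x' t hx').deriv
    rw [hev.deriv_eq]
    exact (hPx x t).deriv
  have uxt_eq : deriv (fun t' => deriv (fun x' => u x' t') x) t = PD2 Q (x, t) := by
    have hev : (fun t' => deriv (fun x' => u x' t') x) =ᶠ[𝓝 t] (fun t' => P x t') := by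
      filter_upwards [hmemt] with t' ht'
      exact (hux' x t' ht').deriv
    rw [hev.deriv_eq]
    exact (hPt x t).deriv
  refine ⟨ux_eq, ?_⟩
  rw [ux_eq, uxx_eq, uxt_eq]
  have hppne : PD1 (PD1 G) (P x t, t) ≠ 0 := by
    have h := hpp x t hxt
    rwa [e2 (P x t) t] at h
  have uval : u x t = H (P x t) t - P x t * PD1 G (P x t, t) := by
    rw [hu x t, (hDp (P x t) t).deriv]
  have h1 := fact1 x t hxt
  have h2 := fact2 x t hxt
  have h3 := hPDE' (P x t) t
  have key : (PD2 Q (x, t) - u x t * PD1 Q (x, t) + κ * P x t ^ 2)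
      * PD1 (PD1 G) (P x t, t) = 0 := by
    linear_combination h2 - u x t * h1 - h3 + uval
  rcases mul_eq_zero.mp key with h | h
  · exact h
  · exact absurd h hppne
end
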